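/- arXiv:math/0203015 — 3 statements merged into one kernel-verified Lean document; each statement's English description precedes it below -/
import Mathlib

section
/- Let (X,d) be a δ-hyperbolic geodesic metric space with δ > 0 and let [x_p, x_q] be a geodesic segment in X. Let p, q ∈ X be such that x_p is a projection of p on [x_p, x_q] and x_q is a projection of q on [x_p, x_q]. Then: (1) if d(x_p, x_q) ≥ 100δ, then the concatenation of geodesic segments [p, x_p], [x_p, x_q], [x_q, q] is a (1, 30δ)-quasigeodesic in X; (2) in general, either this concatenation [p, x_p] ∪ [x_p, x_q] ∪ [x_q, q] is a (1, 30δ)-quasigeodesic, or there exist points x ∈ [x_p, p] and y ∈ [x_q, q] such that d(x_p, x) = d(x_q, y) and d(x, y) ≤ 100δ. -/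
noncomputable section

namespace KW

open Metric Set Pointwise

variable {X : Type*} [MetricSpace X]

/-- `s` is (the image of) a unit-speed geodesic segment joining `x` to `y`. -/
def IsGeodesicSegment (s : Set X) (x y : X) : Prop :=
  ∃ (b : ℝ) (f : ℝ → X), 0 ≤ b ∧ f 0 = x ∧ f b = y ∧
    (∀ u ∈ Set.Icc (0 : ℝ) b, ∀ v ∈ Set.Icc (0 : ℝ) b, dist (f u) (f v) = |u - v|) ∧
    s = f '' Set.Icc 0 b

/-- A geodesic metric space. -/
def GeodesicSpace (X : Type*) [MetricSpace X] : Prop :=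
  ∀ x y : X, ∃ s : Set X, IsGeodesicSegment s x y

/-- `X` is `δ`-hyperbolic: geodesic, and every geodesic triangle is `δ`-thin. -/
def DeltaHyperbolic (δ : ℝ) (X : Type*) [MetricSpace X] : Prop :=
  GeodesicSpace X ∧
    ∀ (x y z : X) (s₁ s₂ s₃ : Set X),
      IsGeodesicSegment s₁ x y → IsGeodesicSegment s₂ y z → IsGeodesicSegment s₃ x z →
      ∀ p ∈ s₁, ∃ q ∈ s₂ ∪ s₃, dist p q ≤ δ

/-- `A` is an `ε`-quasiconvex subset of `X`. -/
def Quasiconvex (ε : ℝ) (A : Set X) : Prop :=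
  ∀ x ∈ A, ∀ y ∈ A, ∀ s : Set X, IsGeodesicSegment s x y → ∀ p ∈ s, ∃ a ∈ A, dist p a ≤ ε

/-- The Gromov product `(y,z)_x`. -/
def gromov (x y z : X) : ℝ := (dist y x + dist z x - dist y z) / 2

def IsGeodesicRay (γ : ℝ → X) : Prop :=
  ∀ s t : ℝ, 0 ≤ s → 0 ≤ t → dist (γ s) (γ t) = |s - t|

def IsBiGeodesic (γ : ℝ → X) : Prop :=
  ∀ s t : ℝ, dist (γ s) (γ t) = |s - t|

/-- `A` and `B` are `K`-Hausdorff close. -/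
def HClose (K : ℝ) (A B : Set X) : Prop :=
  (∀ a ∈ A, ∃ b ∈ B, dist a b ≤ K) ∧ ∀ b ∈ B, ∃ a ∈ A, dist a b ≤ K

def HausdorffClose (A B : Set X) : Prop := ∃ K : ℝ, HClose K A B

/-- Two geodesic rays are asymptotic iff their images are Hausdorff close. -/
def Asymptotic (γ γ' : ℝ → X) : Prop :=
  HausdorffClose (γ '' Set.Ici 0) (γ' '' Set.Ici 0)

def GRay (X : Type*) [MetricSpace X] : Type _ := {γ : ℝ → X // IsGeodesicRay γ}

theorem asymptotic_refl (γ : ℝ → X) : Asymptotic γ γ :=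
  ⟨0, fun a ha => ⟨a, ha, by simp⟩, fun b hb => ⟨b, hb, by simp⟩⟩

theorem asymptotic_symm {γ γ' : ℝ → X} (h : Asymptotic γ γ') : Asymptotic γ' γ := by
  obtain ⟨K, h₁, h₂⟩ := h
  refine ⟨K, fun a ha => ?_, fun b hb => ?_⟩
  · obtain ⟨b, hb, hd⟩ := h₂ a ha
    exact ⟨b, hb, by rwa [dist_comm]⟩
  · obtain ⟨a, ha, hd⟩ := h₁ b hb
    exact ⟨a, ha, by rwa [dist_comm]⟩

theorem asymptotic_trans {γ₁ γ₂ γ₃ : ℝ → X} (h : Asymptotic γ₁ γ₂)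
    (h' : Asymptotic γ₂ γ₃) : Asymptotic γ₁ γ₃ := by
  obtain ⟨K, h₁, h₂⟩ := h
  obtain ⟨K', h₁', h₂'⟩ := h'
  refine ⟨K + K', fun a ha => ?_, fun c hc => ?_⟩
  · obtain ⟨b, hb, hab⟩ := h₁ a ha
    obtain ⟨c, hc, hbc⟩ := h₁' b hb
    exact ⟨c, hc, (dist_triangle a b c).trans (by linarith)⟩
  · obtain ⟨b, hb, hbc⟩ := h₂' c hc
    obtain ⟨a, ha, hab⟩ := h₂ b hb
    exact ⟨a, ha, (dist_triangle a b c).trans (by linarith)⟩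

def raySetoid (X : Type*) [MetricSpace X] : Setoid (GRay X) where
  r γ γ' := Asymptotic γ.1 γ'.1
  iseqv := ⟨fun γ => asymptotic_refl γ.1, fun h => asymptotic_symm h,
    fun h h' => asymptotic_trans h h'⟩

/-- The (geodesic) boundary of `X`: asymptoty classes of geodesic rays. -/
def Boundary (X : Type*) [MetricSpace X] : Type _ := Quotient (raySetoid X)

def Boundary.mk {X : Type*} [MetricSpace X] (γ : GRay X) : Boundary X :=
  Quotient.mk (raySetoid X) γ

/-- A strongly geodesic metric space. -/
def StronglyGeodesic (X : Type*) [MetricSpace X] : Prop :=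
  GeodesicSpace X ∧
  (∀ γ : ℝ → X, IsGeodesicRay γ → ∀ y : X,
      ∃ γ' : ℝ → X, IsGeodesicRay γ' ∧ γ' 0 = y ∧ Asymptotic γ γ') ∧
  (∀ γ₁ γ₂ : ℝ → X, IsGeodesicRay γ₁ → IsGeodesicRay γ₂ → γ₁ 0 = γ₂ 0 →
      ¬ Asymptotic γ₁ γ₂ →
      ∃ γ : ℝ → X, IsBiGeodesic γ ∧
        HausdorffClose (Set.range γ) (γ₁ '' Set.Ici 0 ∪ γ₂ '' Set.Ici 0)) ∧
  (∀ (x : X) (u : ℕ → X),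
      (∀ M : ℝ, ∃ N : ℕ, ∀ n, N ≤ n → ∀ m, N ≤ m → M ≤ gromov x (u n) (u m)) →
      ∃ γ : ℝ → X, IsGeodesicRay γ ∧ γ 0 = x ∧
        ∀ M : ℝ, ∃ N : ℕ, ∀ n, N ≤ n → ∀ m, N ≤ m → M ≤ gromov x (γ (n : ℝ)) (u m))

/-- The sequence `u` converges to the boundary point `p`, with basepoint `x`. -/
def SeqConvTo (x : X) (u : ℕ → X) (p : Boundary X) : Prop :=
  ∃ γ : GRay X, Boundary.mk γ = p ∧
    ∀ M : ℝ, ∃ N : ℕ, ∀ n, N ≤ n → ∀ m, N ≤ m → M ≤ gromov x (u n) (γ.1 (m : ℝ))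

/-- `γ` is a geodesic ray in the class of the boundary point `p`. -/
def RayTo (γ : ℝ → X) (p : Boundary X) : Prop :=
  ∃ h : IsGeodesicRay γ, Boundary.mk ⟨γ, h⟩ = p

/-- `γ` is a biinfinite geodesic whose two ends converge to `p` and `q`. -/
def BiGeodesicJoins (γ : ℝ → X) (p q : Boundary X) : Prop :=
  IsBiGeodesic γ ∧ SeqConvTo (γ 0) (fun n => γ (-(n : ℝ))) p ∧
    SeqConvTo (γ 0) (fun n => γ (n : ℝ)) q

/-- `s` is (the image of) a geodesic joining two points of `X ∪ ∂X`. -/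
def JoinSet : X ⊕ Boundary X → X ⊕ Boundary X → Set X → Prop
  | Sum.inl x, Sum.inl y, s => IsGeodesicSegment s x y
  | Sum.inl x, Sum.inr p, s => ∃ γ : ℝ → X, γ 0 = x ∧ RayTo γ p ∧ s = γ '' Set.Ici 0
  | Sum.inr p, Sum.inl x, s => ∃ γ : ℝ → X, γ 0 = x ∧ RayTo γ p ∧ s = γ '' Set.Ici 0
  | Sum.inr p, Sum.inr q, s => ∃ γ : ℝ → X, BiGeodesicJoins γ p q ∧ s = Set.range γ

/-- The convex hull `Conv(A)` of a subset `A ⊆ X ∪ ∂X`. -/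
def geoConv (A : Set (X ⊕ Boundary X)) : Set X :=
  {x | (∃ a : X, A = {Sum.inl a} ∧ x = a) ∨
    ∃ p ∈ A, ∃ q ∈ A, p ≠ q ∧ ∃ s : Set X, JoinSet p q s ∧ x ∈ s}

/-- The distance between two subsets of `X`. -/
def setDist (A B : Set X) : ℝ := sInf (Set.image2 dist A B)

/-- `a` is a projection of `p` on `A` (relative to `δ`). -/
def IsProjection (δ : ℝ) (A : Set X) (p a : X) : Prop :=
  a ∈ A ∧ ∀ a' ∈ A, dist p a ≤ dist p a' + δ

/-- `f` restricted to `[0,L]` is a unit-speed geodesic from `x` to `y`. -/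
def GeodParam (f : ℝ → X) (L : ℝ) (x y : X) : Prop :=
  0 ≤ L ∧ f 0 = x ∧ f L = y ∧
    ∀ u ∈ Set.Icc (0 : ℝ) L, ∀ v ∈ Set.Icc (0 : ℝ) L, dist (f u) (f v) = |u - v|

/-- Concatenation of three paths, the first on `[0,a]`, the second on `[0,b]`. -/
def concat3 (f₁ f₂ f₃ : ℝ → X) (a b : ℝ) : ℝ → X := fun t =>
  if t ≤ a then f₁ t else if t ≤ a + b then f₂ (t - a) else f₃ (t - a - b)

/-- `f` is a `(lam, ε)`-quasigeodesic on `[a,b]`. -/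
def QuasigeodesicOn (lam ε : ℝ) (f : ℝ → X) (a b : ℝ) : Prop :=
  ∀ s ∈ Set.Icc a b, ∀ t ∈ Set.Icc a b, |s - t| ≤ lam * dist (f s) (f t) + ε

/-- The action of `G` on `X` is by isometries. -/
def IsometricAction (G Y : Type*) [Group G] [MetricSpace Y] [MulAction G Y] : Prop :=
  ∀ (g : G) (x y : Y), dist (g • x) (g • y) = dist x y

section GroupAction

variable {G : Type*} [Group G]

/-- The limit set `Λ(U) ⊆ ∂X` of a subgroup `U ≤ G`. -/
def limitSet (X : Type*) [MetricSpace X] [MulAction G X] (U : Subgroup G) :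
    Set (Boundary X) :=
  {p | ∃ x₀ : X, ∃ u : ℕ → U, SeqConvTo x₀ (fun n => ((u n : G)) • x₀) p}

/-- The small displacement set `E(U)` (relative to `δ`). -/
def smallDispSet (X : Type*) [MetricSpace X] [MulAction G X] (δ : ℝ) (U : Subgroup G) :
    Set X :=
  {x | ∃ u : G, u ∈ U ∧ u ≠ 1 ∧ dist x (u • x) ≤ 100 * δ}

/-- `Z(U) = Conv(Λ(U) ∪ E(U))`. -/
def ZSet (X : Type*) [MetricSpace X] [MulAction G X] (δ : ℝ) (U : Subgroup G) : Set X :=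
  geoConv (Sum.inr '' limitSet X U ∪ Sum.inl '' smallDispSet X δ U)

/-- The convex hull `X(U)`: the closure of `Conv(Z(U))`. -/
def cHull (X : Type*) [MetricSpace X] [MulAction G X] (δ : ℝ) (U : Subgroup G) : Set X :=
  closure (geoConv (Sum.inl '' ZSet X δ U))

/-- The weak convex hull `X_U = Conv(Λ(U))`. -/
def weakHull (X : Type*) [MetricSpace X] [MulAction G X] (U : Subgroup G) : Set X :=
  geoConv (Sum.inr '' limitSet X U)

/-- `l_V(g) = d(X(V), gX(V))`. -/
def lV (X : Type*) [MetricSpace X] [MulAction G X] (δ : ℝ) (V : Subgroup G) (g : G) : ℝ :=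
  setDist (cHull X δ V) (g • cHull X δ V)

/-- The translation length of `g`. -/
def translationLength (X : Type*) [MetricSpace X] [MulAction G X] (g : G) : ℝ :=
  sInf (Set.range fun x : X => dist x (g • x))

/-- The asymptotic translation length of `g`. -/
def asympTranslationLength (X : Type*) [MetricSpace X] [MulAction G X] (g : G) : ℝ :=
  Filter.liminf (fun n : ℕ => translationLength X (g ^ n) / (n : ℝ)) Filter.atTop

/-- An elementary move between `G`-tuples `(U₁,…,U_n; h₁,…,h_m)`. -/
def gMove {n m : ℕ} (M M' : (Fin n → Subgroup G) × (Fin m → G)) : Prop :=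
  (M'.2 = M.2 ∧ ∃ (j : Fin n) (g : G),
      g ∈ Subgroup.closure (Set.range M.2 ∪ ⋃ i ∈ {i : Fin n | i ≠ j}, ((M.1 i : Set G))) ∧
      (∀ i, i ≠ j → M'.1 i = M.1 i) ∧
      M'.1 j = Subgroup.map (MulAut.conj g).toMonoidHom (M.1 j)) ∨
  (M'.1 = M.1 ∧ ∃ (i : Fin m) (g₁ g₂ : G),
      g₁ ∈ Subgroup.closure (M.2 '' {j : Fin m | j ≠ i} ∪ ⋃ t, ((M.1 t : Set G))) ∧
      g₂ ∈ Subgroup.closure (M.2 '' {j : Fin m | j ≠ i} ∪ ⋃ t, ((M.1 t : Set G))) ∧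
      (∀ j, j ≠ i → M'.2 j = M.2 j) ∧
      M'.2 i = g₁ * M.2 i * g₂)

/-- Equivalence of `G`-tuples: a finite chain of elementary moves. -/
def gEquiv {n m : ℕ} :
    (Fin n → Subgroup G) × (Fin m → G) → (Fin n → Subgroup G) × (Fin m → G) → Prop :=
  Relation.ReflTransGen gMove

/-- The family of factors `U₁,…,U_n, F(h₁),…,F(h_m)`. -/
def FF {n : ℕ} (m : ℕ) (U : Fin n → Subgroup G) : Fin n ⊕ Fin m → Type _
  | Sum.inl j => ↥(U j)
  | Sum.inr _ => FreeGroup PUnit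

instance ffGroup {n : ℕ} (m : ℕ) (U : Fin n → Subgroup G) :
    (i : Fin n ⊕ Fin m) → Group (FF m U i)
  | Sum.inl j => inferInstanceAs (Group ↥(U j))
  | Sum.inr _ => inferInstanceAs (Group (FreeGroup PUnit))

def ffHoms {n m : ℕ} (U : Fin n → Subgroup G) (H : Fin m → G) :
    (i : Fin n ⊕ Fin m) → FF m U i →* G
  | Sum.inl j => (U j).subtype
  | Sum.inr j => FreeGroup.lift fun _ => H j

/-- The canonical homomorphism `U₁ ∗ ⋯ ∗ U_n ∗ F(H) → G`. -/
def freeProdHom {n m : ℕ} (U : Fin n → Subgroup G) (H : Fin m → G) :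
    Monoid.CoprodI (FF m U) →* G :=
  Monoid.CoprodI.lift (ffHoms U H)

/-- `W = U₁ ∗ ⋯ ∗ U_n ∗ F(H)`: the canonical homomorphism is injective with image `W`. -/
def IsFreeProdDecomp {n m : ℕ} (U : Fin n → Subgroup G) (H : Fin m → G)
    (W : Subgroup G) : Prop :=
  Function.Injective (freeProdHom U H) ∧ (freeProdHom U H).range = W

/-- Minimality of the `G`-pair `(V; H)` (relative to a `1`-hyperbolic `G`-space `X`). -/
def PairMinimal (X : Type*) [MetricSpace X] [MulAction G X] {m : ℕ}
    (V : Subgroup G) (H : Fin m → G) : Prop :=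
  ∀ (V' : Subgroup G) (H' : Fin m → G),
    gEquiv ((fun _ : Fin 1 => V), H) ((fun _ : Fin 1 => V'), H') →
    (∑ i, lV X 1 V (H i)) ≤ (∑ i, lV X 1 V' (H' i)) + 1

/-- An elementary Nielsen move on tuples of elements of `G`. -/
def NielsenMove {k : ℕ} (g g' : Fin k → G) : Prop :=
  (∃ i : Fin k, (∀ j, j ≠ i → g' j = g j) ∧ g' i = (g i)⁻¹) ∨
  (∃ i j : Fin k, i ≠ j ∧ (∀ t, t ≠ i → g' t = g t) ∧ g' i = g i * g j) ∨
  (∃ i j : Fin k, i ≠ j ∧ g' = g ∘ Equiv.swap i j)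

/-- Nielsen equivalence: a finite chain of elementary Nielsen moves. -/
def NielsenEq {k : ℕ} : (Fin k → G) → (Fin k → G) → Prop :=
  Relation.ReflTransGen NielsenMove

/-- Word length of `g` with respect to the (symmetrized) generating set `S`. -/
def wordLength (S : Set G) (g : G) : ℕ :=
  sInf {n : ℕ | ∃ f : Fin n → G, (∀ i, f i ∈ S ∨ (f i)⁻¹ ∈ S) ∧ (List.ofFn f).prod = g}

/-- `(X, ι)` is a model of the Cayley graph `Γ(G,S)`. -/
def IsCayleyGraph (G : Type*) [Group G] (S : Set G) (X : Type*) [MetricSpace X]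
    [MulAction G X] (ι : G → X) : Prop :=
  IsometricAction G X ∧
  (∀ g h : G, ι (g * h) = g • ι h) ∧
  Function.Injective ι ∧
  GeodesicSpace X ∧
  (∀ g h : G, dist (ι g) (ι h) = (wordLength S (g⁻¹ * h) : ℝ)) ∧
  ∀ x : X, ∃ g h : G, wordLength S (g⁻¹ * h) ≤ 1 ∧
    ∃ s : Set X, IsGeodesicSegment s (ι g) (ι h) ∧ x ∈ s

/-- `H` is a quasiconvex subgroup (with respect to the Cayley graph model `(X, ι)`). -/
def QCSubgroup (X : Type*) [MetricSpace X] (ι : G → X) (H : Subgroup G) : Prop :=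
  ∃ ε : ℝ, 0 ≤ ε ∧ Quasiconvex ε (ι '' (H : Set G))

end GroupAction

/-- Every nontrivial element of finite order has finite centralizer. -/
def AlmostTorsionFree (G : Type*) [Group G] : Prop :=
  ∀ g : G, g ≠ 1 → IsOfFinOrder g → ((Subgroup.centralizer {g} : Subgroup G) : Set G).Finite

/-- `U` is nontrivial and admits no nontrivial free product decomposition. -/
def FreelyIndecomposable (U : Type*) [Group U] : Prop :=
  Nontrivial U ∧
    ¬ ∃ A B : Subgroup U, A ≠ ⊥ ∧ B ≠ ⊥ ∧
        Function.Bijective (Monoid.Coprod.lift A.subtype B.subtype)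

def InfiniteCyclic (U : Type*) [Group U] : Prop := Infinite U ∧ IsCyclic U

def VirtuallyCyclic (U : Type*) [Group U] : Prop :=
  ∃ H : Subgroup U, H.index ≠ 0 ∧ IsCyclic ↥H

def NonElementary (U : Type*) [Group U] : Prop := ¬ Finite U ∧ ¬ VirtuallyCyclic U

end KW

universe u

namespace KW

open Pointwise Metric Set

section Helpers

variable {X : Type u} [MetricSpace X]

lemma gp_dist0 {f : ℝ → X} {L : ℝ} {x y : X} (h : GeodParam f L x y)
    {r : ℝ} (hr : r ∈ Set.Icc (0 : ℝ) L) : dist x (f r) = r := by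
  have := h.2.2.2 0 ⟨le_refl _, h.1⟩ r hr
  rw [h.2.1] at this
  rw [this, abs_of_nonpos (by linarith [hr.1]), neg_sub, sub_zero]

lemma gp_distL {f : ℝ → X} {L : ℝ} {x y : X} (h : GeodParam f L x y)
    {r : ℝ} (hr : r ∈ Set.Icc (0 : ℝ) L) : dist (f r) y = L - r := by
  have := h.2.2.2 r hr L ⟨h.1, le_refl _⟩
  rw [h.2.2.1] at this
  rw [this, abs_of_nonpos (by linarith [hr.2]), neg_sub]

lemma seg_of_geodParam {f : ℝ → X} {L : ℝ} {x y : X} (h : GeodParam f L x y) :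
    IsGeodesicSegment (f '' Set.Icc 0 L) x y :=
  ⟨L, f, h.1, h.2.1, h.2.2.1, h.2.2.2, rfl⟩

lemma sub_seg {f : ℝ → X} {L : ℝ} {x y : X} (h : GeodParam f L x y)
    {t : ℝ} (ht : t ∈ Set.Icc (0 : ℝ) L) :
    IsGeodesicSegment (f '' Set.Icc 0 t) x (f t) :=
  ⟨t, f, ht.1, h.2.1, rfl,
    fun u hu v hv => h.2.2.2 u ⟨hu.1, hu.2.trans ht.2⟩ v ⟨hv.1, hv.2.trans ht.2⟩, rfl⟩

lemma geodParam_of_seg {s : Set X} {x y : X} (h : IsGeodesicSegment s x y) :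
    ∃ f : ℝ → X, GeodParam f (dist x y) x y ∧ s = f '' Set.Icc 0 (dist x y) := by
  obtain ⟨b, f, hb, h0, hbx, hiso, hset⟩ := h
  have hd : dist x y = b := by
    have h' := hiso 0 ⟨le_refl _, hb⟩ b ⟨hb, le_refl _⟩
    rw [h0, hbx, abs_of_nonpos (by linarith), neg_sub, sub_zero] at h'
    exact h'
  rw [hd]
  exact ⟨f, ⟨hb, h0, hbx, hiso⟩, hset⟩

lemma geodParam_exists (hX : GeodesicSpace X) (x y : X) :
    ∃ f : ℝ → X, GeodParam f (dist x y) x y := by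
  obtain ⟨s, hs⟩ := hX x y
  obtain ⟨f, hf, _⟩ := geodParam_of_seg hs
  exact ⟨f, hf⟩

lemma seg_mem_right {s : Set X} {x y : X} (h : IsGeodesicSegment s x y) : y ∈ s := by
  obtain ⟨b, f, hb, h0, hbx, hiso, hset⟩ := h
  rw [hset]
  exact ⟨b, ⟨hb, le_refl _⟩, hbx⟩

lemma const_seg (x : X) : IsGeodesicSegment {x} x x := by
  refine ⟨0, fun _ => x, le_refl _, rfl, rfl, ?_, ?_⟩
  · intro u hu v hv
    obtain rfl : u = 0 := le_antisymm hu.2 hu.1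
    obtain rfl : v = 0 := le_antisymm hv.2 hv.1
    simp
  · simp

lemma seg_symm {s : Set X} {x y : X} (h : IsGeodesicSegment s x y) :
    IsGeodesicSegment s y x := by
  obtain ⟨b, f, hb, h0, hbx, hiso, hset⟩ := h
  refine ⟨b, fun t => f (b - t), hb, by simpa using hbx, by simpa using h0, ?_, ?_⟩
  · intro u hu v hv
    have := hiso (b - u) ⟨by linarith [hu.2], by linarith [hu.1]⟩
      (b - v) ⟨by linarith [hv.2], by linarith [hv.1]⟩
    rw [this, abs_sub_comm]
    congr 1
    ring
  · rw [hset]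
    ext w
    constructor
    · rintro ⟨t, ht, rfl⟩
      exact ⟨b - t, ⟨by linarith [ht.2], by linarith [ht.1]⟩, by simp⟩
    · rintro ⟨t, ht, rfl⟩
      exact ⟨b - t, ⟨by linarith [ht.2], by linarith [ht.1]⟩, rfl⟩

lemma projLB {δ : ℝ} (hδ : 0 < δ) (hhyp : DeltaHyperbolic δ X)
    {s : Set X} {xp xq p : X} (hs : IsGeodesicSegment s xp xq)
    (hproj : ∀ a' ∈ s, dist p xp ≤ dist p a' + δ)
    {g : ℝ → X} {L : ℝ} (hg : GeodParam g L xp xq)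
    {t : ℝ} (ht : t ∈ Set.Icc (0 : ℝ) L) :
    dist p xp + t ≤ dist p (g t) + 9 * δ := by
  -- every point of the geodesic g is within δ of s
  have H0 : ∀ r ∈ Set.Icc (0 : ℝ) L, dist p xp ≤ dist p (g r) + 2 * δ := by
    intro r hr
    obtain ⟨w, hw, hdw⟩ := hhyp.2 xp xq xq (g '' Set.Icc 0 L) {xq} s
      (seg_of_geodParam hg) (const_seg xq) hs (g r) ⟨r, hr, rfl⟩
    have hws : w ∈ s := by
      rcases hw with hw | hw
      · rw [Set.mem_singleton_iff] at hw
        rw [hw]; exact seg_mem_right hs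
      · exact hw
    have := hproj w hws
    have := dist_triangle p (g r) w
    linarith
  by_cases hT : t ≤ 7 * δ
  · have := H0 t ht
    linarith
  · push_neg at hT
    have h5L : (5 * δ) ∈ Set.Icc (0 : ℝ) L := ⟨by linarith, by linarith [ht.2]⟩
    have h5t : (5 * δ) ∈ Set.Icc (0 : ℝ) t := ⟨by linarith, by linarith⟩
    obtain ⟨f2p, hf2p⟩ := geodParam_exists hhyp.1 (g t) p
    obtain ⟨f3p, hf3p⟩ := geodParam_exists hhyp.1 xp p
    obtain ⟨q', hq', hdq⟩ := hhyp.2 xp (g t) p (g '' Set.Icc 0 t)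
      (f2p '' Set.Icc 0 (dist (g t) p)) (f3p '' Set.Icc 0 (dist xp p))
      (sub_seg hg ht) (seg_of_geodParam hf2p) (seg_of_geodParam hf3p)
      (g (5 * δ)) ⟨5 * δ, h5t, rfl⟩
    have hw5 : dist p (g (5 * δ)) + 2 * δ ≥ dist p xp := H0 _ h5L
    have hwt : dist (g (5 * δ)) (g t) = t - 5 * δ := by
      rw [hg.2.2.2 (5 * δ) h5L t ht, abs_of_nonpos (by linarith), neg_sub]
    rcases hq' with hq' | hq'
    · -- q' on [g t, p]
      obtain ⟨r, hr, rfl⟩ := hq'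
      have e1 : dist (g t) (f2p r) = r := gp_dist0 hf2p hr
      have e2 : dist (f2p r) p = dist (g t) p - r := gp_distL hf2p hr
      have ta := dist_triangle (g (5 * δ)) (f2p r) (g t)
      have tb := dist_triangle p (f2p r) (g (5 * δ))
      have c1 : dist p (g t) = dist (g t) p := dist_comm _ _
      have c2 : dist (f2p r) (g t) = dist (g t) (f2p r) := dist_comm _ _
      have c3 : dist (f2p r) (g (5 * δ)) = dist (g (5 * δ)) (f2p r) := dist_comm _ _
      have c4 : dist p (f2p r) = dist (f2p r) p := dist_comm _ _
      linarith
    · -- q' on [xp, p] : contradiction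
      obtain ⟨r, hr, rfl⟩ := hq'
      have e1 : dist xp (f3p r) = r := gp_dist0 hf3p hr
      have e2 : dist (f3p r) p = dist xp p - r := gp_distL hf3p hr
      have hxpw : dist xp (g (5 * δ)) = 5 * δ := gp_dist0 hg h5L
      have ta := dist_triangle p (f3p r) (g (5 * δ))
      have tb := dist_triangle xp (f3p r) (g (5 * δ))
      have c1 : dist p xp = dist xp p := dist_comm _ _
      have c2 : dist p (f3p r) = dist (f3p r) p := dist_comm _ _
      have c3 : dist (f3p r) (g (5 * δ)) = dist (g (5 * δ)) (f3p r) := dist_comm _ _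
      have hr0 := hr.1
      linarith

end Helpers

section Main

variable {X : Type u} [MetricSpace X]

lemma mainQG {δ : ℝ} (hδ : 0 < δ) (hhyp : DeltaHyperbolic δ X)
    {xp xq : X} {s : Set X} (hs : IsGeodesicSegment s xp xq)
    {p q : X} (hp : IsProjection δ s p xp) (hq : IsProjection δ s q xq)
    (hb : 100 * δ ≤ dist xp xq)
    {f₁ f₂ f₃ : ℝ → X} (h1 : GeodParam f₁ (dist p xp) p xp)
    (h2 : GeodParam f₂ (dist xp xq) xp xq) (h3 : GeodParam f₃ (dist xq q) xq q) :
    QuasigeodesicOn 1 (30 * δ) (concat3 f₁ f₂ f₃ (dist p xp) (dist xp xq)) 0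
      (dist p xp + dist xp xq + dist xq q) := by
  set a := dist p xp with ha
  set b := dist xp xq with hbdef
  set c := dist xq q with hc
  have ha0 : 0 ≤ a := dist_nonneg
  have hb0 : 0 ≤ b := dist_nonneg
  have hc0 : 0 ≤ c := dist_nonneg
  -- reversed parametrization of f₂
  have hrev : GeodParam (fun r => f₂ (b - r)) b xq xp := by
    refine ⟨hb0, by simpa using h2.2.2.1, by simpa using h2.2.1, ?_⟩
    intro u hu v hv
    have := h2.2.2.2 (b - u) ⟨by linarith [hu.2], by linarith [hu.1]⟩
      (b - v) ⟨by linarith [hv.2], by linarith [hv.1]⟩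
    rw [this, abs_sub_comm]
    congr 1
    ring
  have P1 : ∀ t ∈ Set.Icc (0 : ℝ) b, a + t ≤ dist p (f₂ t) + 9 * δ := fun t ht =>
    projLB hδ hhyp hs hp.2 h2 ht
  have P2 : ∀ t ∈ Set.Icc (0 : ℝ) b, c + (b - t) ≤ dist q (f₂ t) + 9 * δ := by
    intro t ht
    have h' := projLB hδ hhyp (seg_symm hs) hq.2 hrev
      (t := b - t) ⟨by linarith [ht.2], by linarith [ht.1]⟩
    have e : b - (b - t) = t := by ring
    rw [e] at h'
    have cc : dist q xq = c := dist_comm q xq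
    linarith
  -- distances along f₁ and f₃
  have E1 : ∀ u ∈ Set.Icc (0 : ℝ) a, dist p (f₁ u) = u := fun u hu => gp_dist0 h1 hu
  have E1' : ∀ u ∈ Set.Icc (0 : ℝ) a, dist (f₁ u) xp = a - u := fun u hu => gp_distL h1 hu
  have E3 : ∀ v ∈ Set.Icc (0 : ℝ) c, dist xq (f₃ v) = v := fun v hv => gp_dist0 h3 hv
  have E3' : ∀ v ∈ Set.Icc (0 : ℝ) c, dist (f₃ v) q = c - v := fun v hv => gp_distL h3 hv
  -- cross-piece estimates
  have D1 : ∀ u ∈ Set.Icc (0 : ℝ) a, ∀ t ∈ Set.Icc (0 : ℝ) b,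
      (a - u) + t ≤ dist (f₁ u) (f₂ t) + 9 * δ := by
    intro u hu t ht
    have := P1 t ht
    have tr := dist_triangle p (f₁ u) (f₂ t)
    have := E1 u hu
    linarith
  have D2 : ∀ t ∈ Set.Icc (0 : ℝ) b, ∀ v ∈ Set.Icc (0 : ℝ) c,
      (b - t) + v ≤ dist (f₂ t) (f₃ v) + 9 * δ := by
    intro t ht v hv
    have := P2 t ht
    have tr := dist_triangle q (f₃ v) (f₂ t)
    have e3 := E3' v hv
    have c1 : dist q (f₃ v) = dist (f₃ v) q := dist_comm _ _
    have c2 : dist (f₃ v) (f₂ t) = dist (f₂ t) (f₃ v) := dist_comm _ _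
    linarith
  have D3 : ∀ u ∈ Set.Icc (0 : ℝ) a, ∀ v ∈ Set.Icc (0 : ℝ) c,
      (a - u) + b + v ≤ dist (f₁ u) (f₃ v) + 22 * δ := by
    intro u hu v hv
    have hb2 : (b / 2) ∈ Set.Icc (0 : ℝ) b := ⟨by linarith, by linarith⟩
    have hpm := P1 _ hb2
    have hqm := P2 _ hb2
    have hpx := E1 u hu
    have hxxp := E1' u hu
    have hqz := E3' v hv
    have hxqz := E3 v hv
    have hxm : (a - u) + b / 2 ≤ dist (f₁ u) (f₂ (b / 2)) + 9 * δ := by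
      have tr := dist_triangle p (f₁ u) (f₂ (b / 2))
      linarith
    have hzm : v + b / 2 ≤ dist (f₃ v) (f₂ (b / 2)) + 9 * δ := by
      have tr := dist_triangle q (f₃ v) (f₂ (b / 2))
      have c1 : dist q (f₃ v) = dist (f₃ v) q := dist_comm _ _
      linarith
    -- triangle T1 : xp, xq, x
    obtain ⟨f4, hf4⟩ := geodParam_exists hhyp.1 xq (f₁ u)
    obtain ⟨f5, hf5⟩ := geodParam_exists hhyp.1 xp (f₁ u)
    obtain ⟨m₁, hm₁, hdm₁⟩ := hhyp.2 xp xq (f₁ u) (f₂ '' Set.Icc 0 b)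
      (f4 '' Set.Icc 0 (dist xq (f₁ u))) (f5 '' Set.Icc 0 (dist xp (f₁ u)))
      (seg_of_geodParam h2) (seg_of_geodParam hf4) (seg_of_geodParam hf5)
      (f₂ (b / 2)) ⟨b / 2, hb2, rfl⟩
    rcases hm₁ with hm₁ | hm₁
    swap
    · -- m₁ on [xp, x] : contradiction
      exfalso
      obtain ⟨r, hr, rfl⟩ := hm₁
      have e1 : dist xp (f5 r) = r := gp_dist0 hf5 hr
      have e2 : dist (f5 r) (f₁ u) = dist xp (f₁ u) - r := gp_distL hf5 hr
      have hLx : dist xp (f₁ u) = a - u := by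
        rw [dist_comm]; exact hxxp
      have t1 := dist_triangle p (f₁ u) (f5 r)
      have t2 := dist_triangle p (f5 r) (f₂ (b / 2))
      have c1 : dist (f₁ u) (f5 r) = dist (f5 r) (f₁ u) := dist_comm _ _
      have c2 : dist (f5 r) (f₂ (b / 2)) = dist (f₂ (b / 2)) (f5 r) := dist_comm _ _
      have hr0 := hr.1
      linarith
    · obtain ⟨r₁, hr₁, rfl⟩ := hm₁
      -- triangle T2 : xq, x, z
      obtain ⟨f6, hf6⟩ := geodParam_exists hhyp.1 (f₁ u) (f₃ v)
      have hseg3v : IsGeodesicSegment (f₃ '' Set.Icc 0 v) xq (f₃ v) := sub_seg h3 hv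
      obtain ⟨m₂, hm₂, hdm₂⟩ := hhyp.2 xq (f₁ u) (f₃ v)
        (f4 '' Set.Icc 0 (dist xq (f₁ u)))
        (f6 '' Set.Icc 0 (dist (f₁ u) (f₃ v))) (f₃ '' Set.Icc 0 v)
        (seg_of_geodParam hf4) (seg_of_geodParam hf6) hseg3v
        (f4 r₁) ⟨r₁, hr₁, rfl⟩
      rcases hm₂ with hm₂ | hm₂
      swap
      · -- m₂ on [xq, z] : contradiction
        exfalso
        obtain ⟨r, hr, rfl⟩ := hm₂
        have hrc : r ∈ Set.Icc (0 : ℝ) c := ⟨hr.1, hr.2.trans hv.2⟩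
        have e1 : dist (f₃ r) q = c - r := gp_distL h3 hrc
        have t1 := dist_triangle q (f₃ r) (f4 r₁)
        have t2 := dist_triangle q (f4 r₁) (f₂ (b / 2))
        have c1 : dist q (f₃ r) = dist (f₃ r) q := dist_comm _ _
        have c2 : dist (f4 r₁) (f₃ r) = dist (f₃ r) (f4 r₁) := dist_comm _ _
        have c3 : dist (f4 r₁) (f₂ (b / 2)) = dist (f₂ (b / 2)) (f4 r₁) := dist_comm _ _
        have hr0 := hr.1
        linarith
      · obtain ⟨r, hr, rfl⟩ := hm₂
        have e1 : dist (f₁ u) (f6 r) = r := gp_dist0 hf6 hr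
        have e2 : dist (f6 r) (f₃ v) = dist (f₁ u) (f₃ v) - r := gp_distL hf6 hr
        have t1 := dist_triangle (f₁ u) (f6 r) (f₂ (b / 2))
        have t2 := dist_triangle (f₃ v) (f6 r) (f₂ (b / 2))
        have u1 := dist_triangle (f6 r) (f4 r₁) (f₂ (b / 2))
        have c1 : dist (f₁ u) (f₂ (b / 2)) ≤ r + 2 * δ := by
          have c2 : dist (f4 r₁) (f6 r) = dist (f6 r) (f4 r₁) := dist_comm _ _
          have c3 : dist (f4 r₁) (f₂ (b / 2)) = dist (f₂ (b / 2)) (f4 r₁) := dist_comm _ _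
          linarith
        have c4 : dist (f₃ v) (f₂ (b / 2)) ≤ (dist (f₁ u) (f₃ v) - r) + 2 * δ := by
          have c2 : dist (f4 r₁) (f6 r) = dist (f6 r) (f4 r₁) := dist_comm _ _
          have c3 : dist (f4 r₁) (f₂ (b / 2)) = dist (f₂ (b / 2)) (f4 r₁) := dist_comm _ _
          have c5 : dist (f6 r) (f₃ v) = dist (f₃ v) (f6 r) := dist_comm _ _
          linarith
        linarith
  -- assemble
  have key : ∀ s' t' : ℝ, 0 ≤ s' → s' ≤ t' → t' ≤ a + b + c →
      t' - s' ≤ dist (concat3 f₁ f₂ f₃ a b s') (concat3 f₁ f₂ f₃ a b t') + 30 * δ := by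
    intro s' t' hs0 hst hta
    unfold concat3
    by_cases h1a : s' ≤ a
    · by_cases h2a : t' ≤ a
      · simp only [if_pos h1a, if_pos h2a]
        have e := h1.2.2.2 s' ⟨hs0, h1a⟩ t' ⟨hs0.trans hst, h2a⟩
        rw [e, abs_of_nonpos (by linarith), neg_sub]
        linarith
      · by_cases h2ab : t' ≤ a + b
        · simp only [if_pos h1a, if_neg h2a, if_pos h2ab]
          have := D1 s' ⟨hs0, h1a⟩ (t' - a) ⟨by linarith [not_le.mp h2a], by linarith⟩
          linarith
        · simp only [if_pos h1a, if_neg h2a, if_neg h2ab]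
          have := D3 s' ⟨hs0, h1a⟩ (t' - a - b) ⟨by linarith [not_le.mp h2ab], by linarith⟩
          linarith
    · have hsa := not_le.mp h1a
      have h2a : ¬ t' ≤ a := not_le.mpr (by linarith)
      by_cases h1ab : s' ≤ a + b
      · by_cases h2ab : t' ≤ a + b
        · simp only [if_neg h1a, if_neg h2a, if_pos h1ab, if_pos h2ab]
          have e := h2.2.2.2 (s' - a) ⟨by linarith, by linarith⟩
            (t' - a) ⟨by linarith, by linarith⟩
          rw [e, abs_of_nonpos (by linarith), neg_sub]
          linarith
        · simp only [if_neg h1a, if_neg h2a, if_pos h1ab, if_neg h2ab]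
          have := D2 (s' - a) ⟨by linarith, by linarith⟩
            (t' - a - b) ⟨by linarith [not_le.mp h2ab], by linarith⟩
          linarith
      · have h2ab : ¬ t' ≤ a + b := not_le.mpr (by linarith [not_le.mp h1ab])
        simp only [if_neg h1a, if_neg h2a, if_neg h1ab, if_neg h2ab]
        have e := h3.2.2.2 (s' - a - b) ⟨by linarith [not_le.mp h1ab], by linarith⟩
          (t' - a - b) ⟨by linarith [not_le.mp h2ab], by linarith⟩
        rw [e, abs_of_nonpos (by linarith), neg_sub]
        linarith
  intro s' hs' t' ht'
  rw [one_mul]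
  rcases le_total s' t' with h | h
  · rw [abs_of_nonpos (by linarith), neg_sub]
    exact key s' t' hs'.1 h ht'.2
  · rw [abs_of_nonneg (by linarith), dist_comm]
    have := key t' s' ht'.1 h hs'.2
    linarith

end Main

theorem statement7 {X : Type u} [MetricSpace X] (δ : ℝ) (hδ : 0 < δ)
    (hhyp : DeltaHyperbolic δ X)
    (xp xq : X) (s : Set X) (hs : IsGeodesicSegment s xp xq)
    (p q : X) (hp : IsProjection δ s p xp) (hq : IsProjection δ s q xq) :
    (100 * δ ≤ dist xp xq →
      ∀ f₁ f₂ f₃ : ℝ → X,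
        GeodParam f₁ (dist p xp) p xp → GeodParam f₂ (dist xp xq) xp xq →
        GeodParam f₃ (dist xq q) xq q →
        QuasigeodesicOn 1 (30 * δ) (concat3 f₁ f₂ f₃ (dist p xp) (dist xp xq)) 0
          (dist p xp + dist xp xq + dist xq q)) ∧
    (∀ f₁ f₂ f₃ : ℝ → X,
      GeodParam f₁ (dist p xp) p xp → GeodParam f₂ (dist xp xq) xp xq →
      GeodParam f₃ (dist xq q) xq q →
      QuasigeodesicOn 1 (30 * δ) (concat3 f₁ f₂ f₃ (dist p xp) (dist xp xq)) 0
        (dist p xp + dist xp xq + dist xq q) ∨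
      ∃ u ∈ Set.Icc (0 : ℝ) (dist p xp), ∃ v ∈ Set.Icc (0 : ℝ) (dist xq q),
        dist xp (f₁ u) = dist xq (f₃ v) ∧ dist (f₁ u) (f₃ v) ≤ 100 * δ) := by

  constructor
  · intro hb f₁ f₂ f₃ h1 h2 h3
    exact mainQG hδ hhyp hs hp hq hb h1 h2 h3
  · intro f₁ f₂ f₃ h1 h2 h3
    by_cases hb : 100 * δ ≤ dist xp xq
    · exact Or.inl (mainQG hδ hhyp hs hp hq hb h1 h2 h3)
    · right
      refine ⟨dist p xp, ⟨dist_nonneg, le_refl _⟩, 0, ⟨le_refl _, dist_nonneg⟩, ?_, ?_⟩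
      · rw [h1.2.2.1, h3.2.1]
        simp
      · rw [h1.2.2.1, h3.2.1]
        linarith [not_le.mp hb]

end KW
end
end

section
/- Let (X,d) be a strongly geodesic δ-hyperbolic G-space and let U ≤ G be a nontrivial subgroup. Then the convex hull X(U) is nonempty. -/
noncomputable section

universe u v

namespace KW

open Pointwise Metric Set

namespace KWAux

open Metric Set KW

variable {X : Type*} [MetricSpace X]

theorem grom_nonneg (x y z : X) : 0 ≤ gromov x y z := by
  have h := dist_triangle y x z
  have h2 : dist x z = dist z x := dist_comm x z
  unfold gromov; linarith

theorem grom_comm (x y z : X) : gromov x y z = gromov x z y := by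
  unfold gromov; rw [dist_comm y z]; ring

theorem grom_lip (x y y' z : X) : gromov x y z ≤ gromov x y' z + dist y y' := by
  have h1 := dist_triangle y y' x
  have h2 := dist_triangle y' y z
  have h3 : dist y' y = dist y y' := dist_comm _ _
  unfold gromov; linarith

theorem grom_base (x x' y z : X) : gromov x y z ≤ gromov x' y z + dist x x' := by
  have h1 := dist_triangle y x' x
  have h2 := dist_triangle z x' x
  have h3 : dist x' x = dist x x' := dist_comm _ _
  unfold gromov; linarith

theorem grom_add (a b x : X) : gromov a x b + gromov b x a = dist a b := by
  have h : dist b a = dist a b := dist_comm _ _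
  unfold gromov; linarith

theorem grom_smul {G : Type*} [Group G] [MulAction G X] (hiso : IsometricAction G X)
    (g : G) (x y z : X) : gromov (g • x) (g • y) (g • z) = gromov x y z := by
  unfold gromov; rw [hiso, hiso, hiso]

theorem ray_dist0 {γ : ℝ → X} (h : IsGeodesicRay γ) {t : ℝ} (ht : 0 ≤ t) :
    dist (γ 0) (γ t) = t := by
  rw [h 0 t le_rfl ht, zero_sub, abs_neg, abs_of_nonneg ht]

theorem ray_grom {γ : ℝ → X} (h : IsGeodesicRay γ) {s t : ℝ} (hs : 0 ≤ s) (ht : 0 ≤ t) :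
    gromov (γ 0) (γ s) (γ t) = min s t := by
  unfold gromov
  rw [dist_comm (γ s) (γ 0), dist_comm (γ t) (γ 0), ray_dist0 h hs, ray_dist0 h ht,
    h s t hs ht]
  rcases le_total s t with h' | h'
  · rw [abs_of_nonpos (by linarith), min_eq_left h']; ring
  · rw [abs_of_nonneg (by linarith), min_eq_right h']; ring

theorem le_of_min_le_right {a b z : ℝ} (h : min a b ≤ z) (hb : z < b) : a ≤ z := by
  rcases min_le_iff.mp h with h' | h'
  · exact h'
  · linarith

theorem seg_self (x : X) : IsGeodesicSegment {x} x x := by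
  refine ⟨0, fun _ => x, le_rfl, rfl, rfl, ?_, ?_⟩
  · intro u hu v hv
    have hu' : u = 0 := le_antisymm hu.2 hu.1
    have hv' : v = 0 := le_antisymm hv.2 hv.1
    simp [hu', hv']
  · rw [Set.Icc_self]; simp

theorem delta_nonneg [Nonempty X] {δ : ℝ} (h : DeltaHyperbolic δ X) : 0 ≤ δ := by
  obtain ⟨x⟩ := ‹Nonempty X›
  obtain ⟨q, hq, hdq⟩ := h.2 x x x {x} {x} {x} (seg_self x) (seg_self x) (seg_self x) x rfl
  have hqx : q = x := by rcases hq with h' | h' <;> simpa using h'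
  subst hqx; simpa using hdq

theorem seg_rev {s : Set X} {x y : X} (h : IsGeodesicSegment s x y) :
    IsGeodesicSegment s y x := by
  obtain ⟨b, f, hb, h0, hbx, hif, hs⟩ := h
  refine ⟨b, fun t => f (b - t), hb, by simp only [sub_zero]; exact hbx,
    by simp only [sub_self]; exact h0, ?_, ?_⟩
  · intro u hu v hv
    rw [hif (b - u) ⟨by linarith [hu.2], by linarith [hu.1]⟩ (b - v)
      ⟨by linarith [hv.2], by linarith [hv.1]⟩,
      show b - u - (b - v) = -(u - v) by ring, abs_neg]
  · rw [hs]
    ext p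
    constructor
    · rintro ⟨u, hu, rfl⟩
      exact ⟨b - u, ⟨by linarith [hu.2], by linarith [hu.1]⟩, by simp⟩
    · rintro ⟨u, hu, rfl⟩
      exact ⟨b - u, ⟨by linarith [hu.2], by linarith [hu.1]⟩, by simp⟩

theorem seg_left_mem {s : Set X} {x y : X} (h : IsGeodesicSegment s x y) : x ∈ s := by
  obtain ⟨b, f, hb, h0, hbx, hif, hs⟩ := h
  rw [hs]; exact ⟨0, ⟨le_rfl, hb⟩, h0⟩

theorem seg_add {s : Set X} {x y : X} (h : IsGeodesicSegment s x y) {q : X} (hq : q ∈ s) :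
    dist x q + dist q y = dist x y := by
  obtain ⟨b, f, hb, h0, hbx, hif, hs⟩ := h
  rw [hs] at hq
  obtain ⟨u, hu, rfl⟩ := hq
  have h1 : dist x (f u) = u := by
    rw [← h0, hif 0 ⟨le_rfl, hb⟩ u hu, zero_sub, abs_neg, abs_of_nonneg hu.1]
  have h2 : dist (f u) y = b - u := by
    rw [← hbx, hif u hu b ⟨hb, le_rfl⟩, abs_of_nonpos (by linarith [hu.2])]; ring
  have h3 : dist x y = b := by
    rw [← h0, ← hbx, hif 0 ⟨le_rfl, hb⟩ b ⟨hb, le_rfl⟩, zero_sub, abs_neg, abs_of_nonneg hb]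
  rw [h1, h2, h3]; ring

theorem grom_le_mem {s : Set X} {x y : X} (h : IsGeodesicSegment s x y) (w : X) {q : X}
    (hq : q ∈ s) : gromov w x y ≤ dist w q := by
  have hadd := seg_add h hq
  have t1 := dist_triangle x q w
  have t2 := dist_triangle y q w
  have e1 : dist y q = dist q y := dist_comm _ _
  have e2 : dist q w = dist w q := dist_comm _ _
  unfold gromov; linarith

end KWAux

namespace KWAux

open Metric Set KW

variable {X : Type*} [MetricSpace X]

theorem exists_near {δ : ℝ} (hhyp : DeltaHyperbolic δ X) (w x y : X) {s : Set X}
    (hseg : IsGeodesicSegment s x y) :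
    ∃ q ∈ s, dist w q ≤ gromov w x y + 2 * δ := by
  obtain ⟨b, f, hb, h0, hby, hif, hs⟩ := id hseg
  have hxy : dist x y = b := by
    rw [← h0, ← hby, hif 0 ⟨le_rfl, hb⟩ b ⟨hb, le_rfl⟩, zero_sub, abs_neg, abs_of_nonneg hb]
  set u := gromov x w y with hu
  have hu0 : 0 ≤ u := grom_nonneg _ _ _
  have hub : u ≤ b := by
    have ht := dist_triangle w y x
    have e1 : dist w x = dist x w := dist_comm _ _
    have e2 : dist y x = dist x y := dist_comm _ _
    rw [hu]; unfold gromov; rw [hxy] at e2; linarith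
  have hpmem : f u ∈ s := by rw [hs]; exact ⟨u, ⟨hu0, hub⟩, rfl⟩
  have hxp : dist x (f u) = u := by
    rw [← h0, hif 0 ⟨le_rfl, hb⟩ u ⟨hu0, hub⟩, zero_sub, abs_neg, abs_of_nonneg hu0]
  have hpy : dist (f u) y = b - u := by
    rw [← hby, hif u ⟨hu0, hub⟩ b ⟨hb, le_rfl⟩, abs_of_nonpos (by linarith)]; ring
  obtain ⟨s₂, hs₂⟩ := hhyp.1 y w
  obtain ⟨s₃, hs₃⟩ := hhyp.1 x w
  obtain ⟨q, hq, hdpq⟩ := hhyp.2 x y w s s₂ s₃ hseg hs₂ hs₃ (f u) hpmem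
  refine ⟨f u, hpmem, ?_⟩
  rcases hq with hq | hq
  · -- q on [y,w]
    have hadd := seg_add hs₂ hq
    have h1 : dist y (f u) - δ ≤ dist y q := by
      have := dist_triangle y q (f u)
      have e : dist q (f u) = dist (f u) q := dist_comm _ _
      have e2 : dist y (f u) = dist (f u) y := dist_comm _ _
      linarith
    have h2 := dist_triangle w q (f u)
    have e3 : dist w q = dist q w := dist_comm _ _
    have e4 : dist q (f u) = dist (f u) q := dist_comm _ _
    -- dist w (f u) ≤ dist q w + δ = (dist y w - dist y q) + δ ≤ dist y w - (b-u) + 2δ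
    have key : dist w (f u) ≤ dist y w - (b - u) + 2 * δ := by
      rw [dist_comm (f u) y] at hpy
      linarith
    -- gromov w x y = (dist x w + dist y w - b)/2 ; u = (dist w x + dist y x - dist w y)/2
    have e5 : dist x w = dist w x := dist_comm _ _
    have e6 : dist y x = dist x y := dist_comm _ _
    have e7 : dist y w = dist w y := dist_comm _ _
    rw [hu] at key ⊢
    unfold gromov at key ⊢
    rw [hxy] at e6
    linarith
  · -- q on [x,w]
    have hadd := seg_add hs₃ hq
    have h1 : dist x (f u) - δ ≤ dist x q := by
      have := dist_triangle x q (f u)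
      have e : dist q (f u) = dist (f u) q := dist_comm _ _
      linarith
    have h2 := dist_triangle w q (f u)
    have e3 : dist w q = dist q w := dist_comm _ _
    have e4 : dist q (f u) = dist (f u) q := dist_comm _ _
    have key : dist w (f u) ≤ dist x w - u + 2 * δ := by linarith [hxp]
    have e5 : dist x w = dist w x := dist_comm _ _
    have e6 : dist y x = dist x y := dist_comm _ _
    have e7 : dist y w = dist w y := dist_comm _ _
    rw [hu] at key ⊢
    unfold gromov at key ⊢
    rw [hxy] at e6
    linarith

theorem fourpt {δ : ℝ} (hhyp : DeltaHyperbolic δ X) (w x y z : X) :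
    min (gromov w x y) (gromov w y z) ≤ gromov w x z + 3 * δ := by
  obtain ⟨s₁, hs₁⟩ := hhyp.1 x z
  obtain ⟨p, hp, hwp⟩ := exists_near hhyp w x z hs₁
  obtain ⟨s₂, hs₂⟩ := hhyp.1 z y
  obtain ⟨s₃, hs₃⟩ := hhyp.1 x y
  obtain ⟨q, hq, hpq⟩ := hhyp.2 x z y s₁ s₂ s₃ hs₁ hs₂ hs₃ p hp
  have htri := dist_triangle w p q
  rcases hq with hq | hq
  · have h1 : gromov w z y ≤ dist w q := grom_le_mem hs₂ w hq
    have h2 : gromov w y z = gromov w z y := grom_comm _ _ _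
    refine le_trans (min_le_right _ _) ?_
    linarith
  · have h1 : gromov w x y ≤ dist w q := grom_le_mem hs₃ w hq
    refine le_trans (min_le_left _ _) ?_
    linarith

end KWAux

namespace KWAux

open Metric Set KW

variable {X : Type*} [MetricSpace X]

theorem midpoint_bound {G : Type*} [Group G] [MulAction G X] {δ : ℝ} (hδ : 0 ≤ δ)
    (hhyp : DeltaHyperbolic δ X) (hiso : IsometricAction G X) (g : G)
    (hd : ∀ x : X, 100 * δ < dist x (g • x)) (z : X) :
    2 * gromov (g • z) z (g • g • z) + 96 * δ < dist z (g • z) := by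
  set L := dist z (g • z) with hL
  obtain ⟨s₁, hs₁⟩ := hhyp.1 z (g • z)
  obtain ⟨b, f, hb, hf0, hfb, hif, hseq⟩ := id hs₁
  have hbL : b = L := by
    have h := hif 0 ⟨le_rfl, hb⟩ b ⟨hb, le_rfl⟩
    rw [hf0, hfb, zero_sub, abs_neg, abs_of_nonneg hb] at h
    rw [hL, ← h]
  -- s₂ : from g•z to g•g•z
  set f₂ : ℝ → X := fun t => g • f t with hf₂
  have hs₂ : IsGeodesicSegment (f₂ '' Icc 0 b) (g • z) (g • g • z) :=
    ⟨b, f₂, hb, by rw [hf₂]; simp only []; rw [hf0], by rw [hf₂]; simp only []; rw [hfb],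
      fun u hu v hv => by rw [hf₂]; simp only []; rw [hiso]; exact hif u hu v hv, rfl⟩
  -- s₃ : from z to g•g•z
  obtain ⟨s₃X, hs₃0⟩ := hhyp.1 z (g • g • z)
  obtain ⟨D₀, f₃, hD0nn, hf30, hf3b, hif3, hs3eq⟩ := id hs₃0
  have hs₃ : IsGeodesicSegment (f₃ '' Icc 0 D₀) z (g • g • z) :=
    ⟨D₀, f₃, hD0nn, hf30, hf3b, hif3, rfl⟩
  have hDdist : dist z (g • g • z) = D₀ := by
    have h := hif3 0 ⟨le_rfl, hD0nn⟩ D₀ ⟨hD0nn, le_rfl⟩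
    rw [hf30, hf3b, zero_sub, abs_neg, abs_of_nonneg hD0nn] at h
    exact h
  set m := f (b / 2) with hm
  have hmmem : b / 2 ∈ Icc (0:ℝ) b := ⟨by linarith, by linarith⟩
  have hzm : dist z m = b / 2 := by
    rw [hm, ← hf0, hif 0 ⟨le_rfl, hb⟩ (b/2) hmmem, zero_sub, abs_neg,
      abs_of_nonneg (by linarith)]
  have hmgz : dist m (g • z) = b / 2 := by
    rw [hm, ← hfb, hif (b/2) hmmem b ⟨hb, le_rfl⟩, abs_of_nonpos (by linarith)]; ring
  have hgm : g • m = f₂ (b / 2) := rfl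
  have hgzgm : dist (g • z) (g • m) = b / 2 := by rw [hiso]; exact hzm
  have hgmggz : dist (g • m) (g • g • z) = b / 2 := by rw [hiso]; exact hmgz
  have hdm := hd m
  -- first thinness application at m
  obtain ⟨q, hq, hdq⟩ := hhyp.2 z (g • z) (g • g • z) s₁ (f₂ '' Icc 0 b) (f₃ '' Icc 0 D₀)
    hs₁ hs₂ hs₃ m (by rw [hseq]; exact ⟨b/2, hmmem, rfl⟩)
  rcases hq with hq | hq
  · -- q on s₂ : contradiction
    exfalso
    obtain ⟨t, ht, rfl⟩ := hq
    have h1 : dist (g • z) (f₂ t) = t := by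
      rw [hf₂]; simp only []
      rw [show (g:G) • z = g • f 0 by rw [hf0], hiso, hif 0 ⟨le_rfl, hb⟩ t ht, zero_sub,
        abs_neg, abs_of_nonneg ht.1]
    have h2 : dist (g • m) (f₂ t) = |b / 2 - t| := by
      rw [hgm, hf₂]; simp only []
      rw [hiso]; exact hif (b/2) hmmem t ht
    have h3 : |t - b / 2| ≤ δ := by
      have t1 := dist_triangle (g • z) m (f₂ t)
      have t2 := dist_triangle (g • z) (f₂ t) m
      have e : dist (f₂ t) m = dist m (f₂ t) := dist_comm _ _
      rw [dist_comm (g • z) m] at t1 t2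
      rw [abs_le]; constructor <;> [skip; skip] <;> rw [hmgz] at t1 t2 <;> nlinarith [h1]
    have h4 : dist m (g • m) ≤ 2 * δ := by
      have t1 := dist_triangle m (f₂ t) (g • m)
      have e : dist (f₂ t) (g • m) = |b/2 - t| := by rw [dist_comm]; exact h2
      have : |b/2 - t| = |t - b/2| := abs_sub_comm _ _
      linarith
    linarith
  obtain ⟨u, hu, hqe⟩ := hq
  rw [← hqe] at hdq
  -- second thinness application at g•m
  obtain ⟨q', hq', hdq'⟩ := hhyp.2 (g • z) (g • g • z) z (f₂ '' Icc 0 b) (f₃ '' Icc 0 D₀) s₁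
    hs₂ (seg_rev hs₃) (seg_rev hs₁) (g • m) ⟨b/2, hmmem, rfl⟩
  rcases hq' with hq' | hq'
  · -- q' on s₃, continue main argument afterwards
    obtain ⟨u', hu', hqe'⟩ := hq'
    rw [← hqe'] at hdq'
    -- parameters
    have hzq : dist z (f₃ u) = u := by
      rw [← hf30, hif3 0 ⟨le_rfl, hD0nn⟩ u hu, zero_sub, abs_neg, abs_of_nonneg hu.1]
    have hzq' : dist z (f₃ u') = u' := by
      rw [← hf30, hif3 0 ⟨le_rfl, hD0nn⟩ u' hu', zero_sub, abs_neg, abs_of_nonneg hu'.1]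
    have hq'e : dist (f₃ u') (g • g • z) = D₀ - u' := by
      rw [← hf3b, hif3 u' hu' D₀ ⟨hD0nn, le_rfl⟩, abs_of_nonpos (by linarith [hu'.2])]; ring
    have hqq' : dist (f₃ u) (f₃ u') = |u - u'| := hif3 u hu u' hu'
    have e1 : b / 2 - δ ≤ u := by
      have := dist_triangle z (f₃ u) m
      have := dist_triangle z m (f₃ u)
      have e : dist (f₃ u) m = dist m (f₃ u) := dist_comm _ _
      linarith
    have e2 : u ≤ b / 2 + δ := by
      have := dist_triangle z m (f₃ u)
      linarith
    have e3 : b / 2 - δ ≤ D₀ - u' := by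
      have t1 := dist_triangle (g • m) (f₃ u') (g • g • z)
      have t2 := dist_triangle (g • m) (g • g • z) (f₃ u')
      have e : dist (g • g • z) (f₃ u') = dist (f₃ u') (g • g • z) := dist_comm _ _
      linarith
    have hLb : dist z (g • z) = b := by rw [hbL, hL]
    have hzgm : b / 2 ≤ dist z (g • m) := by
      have t := dist_triangle z (g • m) (g • z)
      have e : dist (g • m) (g • z) = b / 2 := by rw [dist_comm]; exact hgzgm
      linarith
    have e4 : b / 2 - δ ≤ u' := by
      have t := dist_triangle z (f₃ u') (g • m)
      have ec : dist (f₃ u') (g • m) = dist (g • m) (f₃ u') := dist_comm _ _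
      linarith
    have e5 : dist m (g • m) ≤ 2 * δ + |u - u'| := by
      have t1 := dist_triangle m (f₃ u) (g • m)
      have t2 := dist_triangle (f₃ u) (f₃ u') (g • m)
      have e : dist (f₃ u') (g • m) = dist (g • m) (f₃ u') := dist_comm _ _
      linarith
    rcases le_total u' u with hc | hc
    · exfalso
      rw [abs_of_nonneg (by linarith)] at e5
      linarith
    · rw [abs_of_nonpos (by linarith)] at e5
      have hD₀ : L + 96 * δ < D₀ := by
        have : u + (u' - u) + (D₀ - u') = D₀ := by ring
        rw [← hbL]
        linarith
      have hgLen : dist (g • g • z) (g • z) = L := by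
        rw [show dist (g • g • z) (g • z) = dist (g • z) z from hiso g (g•z) z, dist_comm]
      have e9 : dist (g • z) z = L := by rw [dist_comm, ← hL]
      unfold gromov
      rw [hgLen, dist_comm z (g • z), hDdist, e9]
      linarith
  · -- q' on s₁ : contradiction
    exfalso
    rw [hseq] at hq'
    obtain ⟨t, ht, rfl⟩ := hq'
    have h1 : dist (g • z) (f t) = b - t := by
      have h := hif t ht b ⟨hb, le_rfl⟩
      rw [hfb, abs_of_nonpos (by linarith [ht.2])] at h
      rw [dist_comm, h]; ring
    have h2 : dist m (f t) = |b / 2 - t| := hif (b/2) hmmem t ht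
    have h3 : |b / 2 - t| ≤ δ := by
      have t1 := dist_triangle (g • z) (g • m) (f t)
      have t2 := dist_triangle (g • z) (f t) (g • m)
      have e : dist (f t) (g • m) = dist (g • m) (f t) := dist_comm _ _
      rw [abs_le]; constructor <;> rw [hgzgm] at t1 t2 <;> nlinarith [h1]
    have h4 : dist m (g • m) ≤ 2 * δ := by
      have t1 := dist_triangle m (f t) (g • m)
      have e : dist (f t) (g • m) = dist (g • m) (f t) := dist_comm _ _
      linarith
    linarith

end KWAux

namespace KWAux

open Metric Set KW

variable {X : Type*} [MetricSpace X]
variable {G : Type*} [Group G] [MulAction G X]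

theorem smul_pow_succ (g : G) (n : ℕ) (z : X) : g ^ (n + 1) • z = g ^ n • (g • z) := by
  rw [pow_succ, mul_smul]

theorem smul_pow_succ2 (g : G) (n : ℕ) (z : X) : g ^ (n + 2) • z = g ^ n • (g • g • z) := by
  rw [show n + 2 = n + 1 + 1 from rfl, pow_succ, mul_smul, smul_pow_succ]

theorem chain_bound {δ : ℝ} (hδ : 0 ≤ δ) (hhyp : DeltaHyperbolic δ X)
    (hiso : IsometricAction G X) (g : G) (z : X)
    (h : 2 * gromov (g • z) z (g • g • z) + 6 * δ < dist z (g • z)) :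
    ∀ n : ℕ, gromov (g ^ n • z) z (g ^ (n + 1) • z) ≤ gromov (g • z) z (g • g • z) + 3 * δ := by
  intro n
  induction n with
  | zero =>
    have h0 : gromov (g ^ 0 • z) z (g ^ 1 • z) = 0 := by
      rw [pow_zero, one_smul]
      unfold gromov
      rw [dist_self z, dist_comm]
      ring
    rw [h0]
    have := grom_nonneg (g • z) z (g • g • z)
    linarith
  | succ n ih =>
    set c := gromov (g • z) z (g • g • z) with hc
    have eq2 : dist (g ^ n • z) (g ^ (n + 1) • z) = dist z (g • z) := by
      rw [smul_pow_succ, hiso]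
    have eq1 : gromov (g ^ (n + 1) • z) z (g ^ n • z)
        = dist (g ^ n • z) (g ^ (n + 1) • z) - gromov (g ^ n • z) z (g ^ (n + 1) • z) := by
      have := grom_add (g ^ n • z) (g ^ (n + 1) • z) z
      linarith
    have eq3 : gromov (g ^ (n + 1) • z) (g ^ n • z) (g ^ (n + 2) • z) = c := by
      rw [smul_pow_succ, smul_pow_succ2, grom_smul hiso]
    have h4 := fourpt hhyp (g ^ (n + 1) • z) (g ^ n • z) z (g ^ (n + 2) • z)
    rw [eq3] at h4
    have hb' : c + 3 * δ < gromov (g ^ (n + 1) • z) (g ^ n • z) z := by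
      have e : gromov (g ^ (n + 1) • z) (g ^ n • z) z = gromov (g ^ (n + 1) • z) z (g ^ n • z) :=
        grom_comm _ _ _
      rw [e, eq1, eq2]
      linarith
    exact le_of_min_le_right (by rwa [min_comm] at h4) hb'

theorem chain_dist_step {δ : ℝ} (hδ : 0 ≤ δ) (hhyp : DeltaHyperbolic δ X)
    (hiso : IsometricAction G X) (g : G) (z : X)
    (h : 2 * gromov (g • z) z (g • g • z) + 6 * δ < dist z (g • z)) (n : ℕ) :
    dist z (g ^ n • z) + (dist z (g • z) - 2 * gromov (g • z) z (g • g • z) - 6 * δ)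
      ≤ dist z (g ^ (n + 1) • z) := by
  have hcb := chain_bound hδ hhyp hiso g z h n
  have eq2 : dist (g ^ (n + 1) • z) (g ^ n • z) = dist z (g • z) := by
    rw [dist_comm, smul_pow_succ, hiso]
  have hid : gromov (g ^ n • z) z (g ^ (n + 1) • z)
      = (dist z (g ^ n • z) + dist (g ^ (n + 1) • z) (g ^ n • z) - dist z (g ^ (n + 1) • z)) / 2 := rfl
  rw [eq2] at hid
  linarith [hid ▸ hcb]

theorem chain_D_ge {δ : ℝ} (hδ : 0 ≤ δ) (hhyp : DeltaHyperbolic δ X)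
    (hiso : IsometricAction G X) (g : G) (z : X)
    (h : 2 * gromov (g • z) z (g • g • z) + 6 * δ < dist z (g • z)) (j n : ℕ) :
    dist z (g ^ j • z) + (n : ℝ) * (dist z (g • z) - 2 * gromov (g • z) z (g • g • z) - 6 * δ)
      ≤ dist z (g ^ (j + n) • z) := by
  induction n with
  | zero => simp
  | succ n ih =>
    have hstep := chain_dist_step hδ hhyp hiso g z h (j + n)
    push_cast
    rw [show j + (n + 1) = j + n + 1 from rfl]
    push_cast at ih
    linarith

theorem chain_gromov {δ : ℝ} (hδ : 0 ≤ δ) (hhyp : DeltaHyperbolic δ X)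
    (hiso : IsometricAction G X) (g : G) (z : X)
    (h : 2 * gromov (g • z) z (g • g • z) + 6 * δ < dist z (g • z)) (n m : ℕ) :
    ((min n m : ℕ) : ℝ) * (dist z (g • z) - 2 * gromov (g • z) z (g • g • z) - 6 * δ)
      ≤ gromov z (g ^ n • z) (g ^ m • z) := by
  set ε := dist z (g • z) - 2 * gromov (g • z) z (g • g • z) - 6 * δ with hε
  have aux : ∀ n m : ℕ, n ≤ m → (n : ℝ) * ε ≤ gromov z (g ^ n • z) (g ^ m • z) := by
    intro n m hnm
    have hdist : dist (g ^ n • z) (g ^ m • z) = dist z (g ^ (m - n) • z) := by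
      conv_lhs => rw [show m = n + (m - n) from (Nat.add_sub_cancel' hnm).symm]
      rw [pow_add, mul_smul, hiso]
    have hDn := chain_D_ge hδ hhyp hiso g z h 0 n
    rw [pow_zero, one_smul, dist_self, zero_add, zero_add] at hDn
    have hDm := chain_D_ge hδ hhyp hiso g z h (m - n) n
    rw [Nat.sub_add_cancel hnm] at hDm
    have hid : gromov z (g ^ n • z) (g ^ m • z)
        = (dist (g ^ n • z) z + dist (g ^ m • z) z - dist (g ^ n • z) (g ^ m • z)) / 2 := rfl
    rw [hdist, dist_comm (g ^ n • z) z, dist_comm (g ^ m • z) z] at hid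
    rw [hid]
    linarith
  rcases le_total n m with hnm | hnm
  · rw [Nat.min_eq_left hnm]; exact aux n m hnm
  · rw [Nat.min_eq_right hnm, grom_comm]; exact aux m n hnm

theorem grom_cond {δ : ℝ} (hδ : 0 ≤ δ) (hhyp : DeltaHyperbolic δ X)
    (hiso : IsometricAction G X) (g : G) (z : X)
    (h : 2 * gromov (g • z) z (g • g • z) + 6 * δ < dist z (g • z)) :
    ∀ M : ℝ, ∃ N : ℕ, ∀ n, N ≤ n → ∀ m, N ≤ m → M ≤ gromov z (g ^ n • z) (g ^ m • z) := by
  intro M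
  set ε := dist z (g • z) - 2 * gromov (g • z) z (g • g • z) - 6 * δ with hε
  have hε0 : 0 < ε := by rw [hε]; linarith
  refine ⟨⌈M / ε⌉₊, fun n hn m hm => ?_⟩
  have h1 : M ≤ (⌈M / ε⌉₊ : ℝ) * ε := by
    rcases le_or_gt M 0 with hM | hM
    · have : (0:ℝ) ≤ (⌈M / ε⌉₊ : ℝ) * ε := by positivity
      linarith
    · have h2 : M / ε ≤ (⌈M / ε⌉₊ : ℝ) := Nat.le_ceil _
      calc M = (M / ε) * ε := by field_simp
      _ ≤ (⌈M / ε⌉₊ : ℝ) * ε := by nlinarith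
  have h2 : (⌈M / ε⌉₊ : ℝ) * ε ≤ ((min n m : ℕ) : ℝ) * ε := by
    have : (⌈M / ε⌉₊ : ℝ) ≤ ((min n m : ℕ) : ℝ) := by
      exact_mod_cast le_min hn hm
    nlinarith
  have h3 := chain_gromov hδ hhyp hiso g z h n m
  linarith

end KWAux

namespace KWAux

open Metric Set KW

variable {X : Type*} [MetricSpace X]
variable {G : Type*} [Group G] [MulAction G X]

theorem chull_nonempty_of_zset (δ : ℝ) (U : Subgroup G) (hgeo : GeodesicSpace X)
    (hz : (ZSet X δ U).Nonempty) : (cHull X δ U).Nonempty := by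
  obtain ⟨z, hzmem⟩ := hz
  refine ⟨z, subset_closure ?_⟩
  by_cases h2 : ∃ z' ∈ ZSet X δ U, z' ≠ z
  · obtain ⟨z', hz', hne⟩ := h2
    obtain ⟨s, hs⟩ := hgeo z z'
    refine Or.inr ⟨Sum.inl z, ⟨z, hzmem, rfl⟩, Sum.inl z', ⟨z', hz', rfl⟩,
      fun hh => hne (Sum.inl.inj hh).symm, s, hs, seg_left_mem hs⟩
  · push_neg at h2
    refine Or.inl ⟨z, ?_, rfl⟩
    ext w
    simp only [Set.mem_singleton_iff]
    constructor
    · rintro ⟨v, hv, rfl⟩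
      rw [h2 v hv]
    · rintro rfl
      exact ⟨z, hzmem, rfl⟩

end KWAux

namespace KWAux

open Metric Set KW

set_option maxHeartbeats 2000000 in
theorem hard_case {G : Type*} [Group G] {X : Type*} [MetricSpace X] [MulAction G X]
    [Nonempty X] (δ : ℝ) (hδ : 0 ≤ δ) (hiso : IsometricAction G X)
    (hsg : StronglyGeodesic X) (hhyp : DeltaHyperbolic δ X)
    (U : Subgroup G) (g : G) (hgmem : g ∈ U)
    (hdisp : ∀ x : X, ∀ u : G, u ∈ U → u ≠ 1 → 100 * δ < dist x (u • x)) (hgne : g ≠ 1) :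
    ∃ p q : Boundary X, p ≠ q ∧ p ∈ limitSet X U ∧ q ∈ limitSet X U ∧
      ∃ γ : ℝ → X, BiGeodesicJoins γ p q := by
  obtain ⟨x₀⟩ := ‹Nonempty X›
  have hd : ∀ x : X, 100 * δ < dist x (g • x) := fun x => hdisp x g hgmem hgne
  have hdinv : ∀ x : X, 100 * δ < dist x (g⁻¹ • x) := by
    intro x
    have h := hd (g⁻¹ • x)
    rwa [smul_inv_smul, dist_comm] at h
  have hmid := midpoint_bound hδ hhyp hiso g hd x₀
  have hmidinv := midpoint_bound hδ hhyp hiso g⁻¹ hdinv x₀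
  set L := dist x₀ (g • x₀) with hL
  set c := gromov (g • x₀) x₀ (g • g • x₀) with hc
  have hc0 : 0 ≤ c := grom_nonneg _ _ _
  have hLc : 2 * c + 6 * δ < L := by linarith
  have hLcinv : 2 * gromov (g⁻¹ • x₀) x₀ (g⁻¹ • g⁻¹ • x₀) + 6 * δ < dist x₀ (g⁻¹ • x₀) := by
    have := grom_nonneg (g⁻¹ • x₀) x₀ (g⁻¹ • g⁻¹ • x₀)
    linarith
  obtain ⟨γp, hγp, hγp0, Gp⟩ :=
    hsg.2.2.2 x₀ (fun n => g ^ n • x₀) (grom_cond hδ hhyp hiso g x₀ hLc)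
  obtain ⟨γm, hγm, hγm0, Gm⟩ :=
    hsg.2.2.2 x₀ (fun n => g⁻¹ ^ n • x₀) (grom_cond hδ hhyp hiso g⁻¹ x₀ hLcinv)
  set B := c + 6 * δ with hB
  have hB0 : 0 ≤ B := by rw [hB]; linarith
  -- opposite orbit points have bounded Gromov products
  have Bnd : ∀ n m : ℕ, gromov x₀ (g ^ n • x₀) (g⁻¹ ^ m • x₀) ≤ B := by
    intro n m
    cases n with
    | zero =>
      have h0 : gromov x₀ (g ^ 0 • x₀) (g⁻¹ ^ m • x₀) = 0 := by
        rw [pow_zero, one_smul]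
        unfold gromov
        rw [dist_self, dist_comm]
        ring
      rw [h0, hB]; linarith
    | succ n =>
      set z := g⁻¹ ^ m • x₀ with hz
      have hz1 : g ^ m • z = x₀ := by rw [hz, inv_pow, smul_inv_smul]
      have hz2 : g ^ m • (g • z) = g • x₀ := by
        rw [hz, inv_pow, smul_smul, smul_smul]
        rw [show g ^ m * g * (g ^ m)⁻¹ = g by group]
      have hz3 : g ^ m • (g • g • z) = g • g • x₀ := by
        have hgg : g ^ m * g * g * (g ^ m)⁻¹ = g * g := by
          rw [← pow_two]; group
        rw [hz, inv_pow, smul_smul, smul_smul, smul_smul, hgg, mul_smul]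
      have hLz : dist z (g • z) = L := by
        rw [← hiso (g ^ m) z (g • z), hz1, hz2]
      have hcz : gromov (g • z) z (g • g • z) = c := by
        rw [← grom_smul hiso (g ^ m) (g • z) z (g • g • z), hz1, hz2, hz3]
      have hch := chain_bound hδ hhyp hiso g z (by rw [hLz, hcz]; exact hLc) m
      rw [hcz] at hch
      have hzb : g ^ (m + 1) • z = g • x₀ := by rw [smul_pow_succ, hz2]
      rw [hz1, hzb] at hch
      -- hch : gromov x₀ z (g • x₀) ≤ c + 3δ
      have hstep := chain_dist_step hδ hhyp hiso g x₀ hLc n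
      have hsucc : g ^ (n + 1) • x₀ = g • (g ^ n • x₀) := by rw [pow_succ', mul_smul]
      have hdist1 : dist (g ^ (n + 1) • x₀) (g • x₀) = dist x₀ (g ^ n • x₀) := by
        rw [hsucc, hiso, dist_comm]
      have hgr2 : L - c - 3 * δ ≤ gromov x₀ (g ^ (n + 1) • x₀) (g • x₀) := by
        have hid : gromov x₀ (g ^ (n + 1) • x₀) (g • x₀) =
            (dist (g ^ (n + 1) • x₀) x₀ + dist (g • x₀) x₀ -
              dist (g ^ (n + 1) • x₀) (g • x₀)) / 2 := rfl
        rw [hdist1, dist_comm (g ^ (n + 1) • x₀) x₀, dist_comm (g • x₀) x₀] at hid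
        rw [hid, ← hL]
        linarith
      have h4 := fourpt hhyp x₀ z (g ^ (n + 1) • x₀) (g • x₀)
      have hfirst : gromov x₀ z (g ^ (n + 1) • x₀) ≤ B :=
        le_of_min_le_right (le_trans h4 (by rw [hB]; linarith)) (by rw [hB]; linarith)
      rw [grom_comm]
      exact hfirst
  -- floor approximation helper
  have fliplem : ∀ (γ : ℝ → X), IsGeodesicRay γ → ∀ t : ℝ, 0 ≤ t → ∀ w : X,
      gromov x₀ (γ ((Nat.floor t : ℕ) : ℝ)) w - 1 ≤ gromov x₀ (γ t) w := by
    intro γ hγ t ht w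
    have hfl : |((Nat.floor t : ℕ) : ℝ) - t| ≤ 1 := by
      rw [abs_le]
      constructor
      · linarith [Nat.lt_floor_add_one t]
      · linarith [Nat.floor_le ht]
    have hd1 : dist (γ ((Nat.floor t : ℕ) : ℝ)) (γ t) ≤ 1 := by
      rw [hγ _ t (by positivity) ht]; exact hfl
    have := grom_lip x₀ (γ ((Nat.floor t : ℕ) : ℝ)) (γ t) w
    linarith
  -- the two rays are not asymptotic
  have notAsym : ¬ Asymptotic γp γm := by
    rintro ⟨K, hK1, hK2⟩
    have hK0 : 0 ≤ K := by
      obtain ⟨bpt, hbpt, hd'⟩ := hK1 (γp 0) ⟨0, Set.mem_Ici.mpr le_rfl, rfl⟩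
      exact le_trans dist_nonneg hd'
    obtain ⟨Np, hNp⟩ := Gp (B + 3 * δ + K + 2)
    obtain ⟨Nm, hNm⟩ := Gm (B + 3 * δ + K + 2)
    set m1 := max Np (Nm + Nat.ceil K + 1) with hm1
    obtain ⟨bpt, hbmem, hbK⟩ := hK1 (γp (m1 : ℝ)) ⟨(m1 : ℝ), Set.mem_Ici.mpr (by positivity), rfl⟩
    obtain ⟨t, ht0, rfl⟩ := hbmem
    rw [Set.mem_Ici] at ht0
    have hxt : dist x₀ (γm t) = t := by rw [← hγm0]; exact ray_dist0 hγm ht0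
    have hxm1 : dist x₀ (γp (m1 : ℝ)) = (m1 : ℝ) := by
      rw [← hγp0]; exact ray_dist0 hγp (by positivity)
    have htlb : (m1 : ℝ) - K ≤ t := by
      have t1 := dist_triangle x₀ (γm t) (γp (m1 : ℝ))
      have e := dist_comm (γm t) (γp (m1 : ℝ))
      linarith
    have hm1K : (Nm : ℝ) + 1 ≤ (m1 : ℝ) - K := by
      have h1 : (Nm + Nat.ceil K + 1 : ℕ) ≤ m1 := le_max_right _ _
      have h2 : K ≤ (Nat.ceil K : ℝ) := Nat.le_ceil K
      have h1' : ((Nm + Nat.ceil K + 1 : ℕ) : ℝ) ≤ (m1 : ℝ) := by exact_mod_cast h1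
      push_cast at h1'
      linarith
    have hfl : Nm ≤ Nat.floor t := Nat.le_floor (by push_cast; linarith)
    have step1 := hNm (Nat.floor t) hfl Nm le_rfl
    have step1' : B + 3 * δ + K + 1 ≤ gromov x₀ (γm t) (g⁻¹ ^ Nm • x₀) := by
      have := fliplem γm hγm t ht0 (g⁻¹ ^ Nm • x₀)
      linarith
    have step2 : B + 3 * δ + 1 ≤ gromov x₀ (γp (m1 : ℝ)) (g⁻¹ ^ Nm • x₀) := by
      have hlip := grom_lip x₀ (γm t) (γp (m1 : ℝ)) (g⁻¹ ^ Nm • x₀)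
      have e := dist_comm (γm t) (γp (m1 : ℝ))
      linarith
    have step3 := hNp m1 (le_max_left _ _) (max Np 1) (le_max_left _ _)
    have h4 := fourpt hhyp x₀ (g ^ (max Np 1) • x₀) (γp (m1 : ℝ)) (g⁻¹ ^ Nm • x₀)
    have hBnd := Bnd (max Np 1) Nm
    have e1 : gromov x₀ (g ^ (max Np 1) • x₀) (γp (m1 : ℝ)) =
        gromov x₀ (γp (m1 : ℝ)) (g ^ (max Np 1) • x₀) := grom_comm _ _ _
    have hmin := lt_min (show B + 3 * δ < gromov x₀ (g ^ (max Np 1) • x₀) (γp (m1 : ℝ)) by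
        rw [e1]; linarith)
      (show B + 3 * δ < gromov x₀ (γp (m1 : ℝ)) (g⁻¹ ^ Nm • x₀) by linarith)
    linarith
  -- limit set memberships
  have hpmem : Boundary.mk ⟨γp, hγp⟩ ∈ limitSet X U := by
    refine ⟨x₀, fun n => (⟨g, hgmem⟩ : U) ^ n, ⟨γp, hγp⟩, rfl, ?_⟩
    intro M
    obtain ⟨N, hN⟩ := Gp M
    refine ⟨N, fun n hn m hm => ?_⟩
    have hfn : (((⟨g, hgmem⟩ : U) ^ n : U) : G) • x₀ = g ^ n • x₀ := by
      norm_cast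
    simp only [hfn]
    rw [grom_comm]
    exact hN m hm n hn
  have hqmem : Boundary.mk ⟨γm, hγm⟩ ∈ limitSet X U := by
    refine ⟨x₀, fun n => (⟨g, hgmem⟩ : U)⁻¹ ^ n, ⟨γm, hγm⟩, rfl, ?_⟩
    intro M
    obtain ⟨N, hN⟩ := Gm M
    refine ⟨N, fun n hn m hm => ?_⟩
    have hfn : ((((⟨g, hgmem⟩ : U)⁻¹ : U) ^ n : U) : G) • x₀ = g⁻¹ ^ n • x₀ := by
      norm_cast
    simp only [hfn]
    rw [grom_comm]
    exact hN m hm n hn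
  have hpq : Boundary.mk (⟨γp, hγp⟩ : GRay X) ≠ Boundary.mk ⟨γm, hγm⟩ := by
    intro h
    exact notAsym (Quotient.exact h)
  -- the biinfinite geodesic
  obtain ⟨γh, hbi, Kh, hKh⟩ := hsg.2.2.1 γp γm hγp hγm (by rw [hγp0, hγm0]) notAsym
  set K' := max Kh 0 with hK'
  have hK'0 : 0 ≤ K' := le_max_right _ _
  have hK'1 : ∀ a ∈ Set.range γh, ∃ bpt ∈ γp '' Set.Ici 0 ∪ γm '' Set.Ici 0,
      dist a bpt ≤ K' := by
    intro a ha
    obtain ⟨bpt, hbmem, hdd⟩ := hKh.1 a ha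
    exact ⟨bpt, hbmem, le_trans hdd (le_max_left _ _)⟩
  set c₀ := dist (γh 0) x₀ with hc₀
  have hc₀0 : 0 ≤ c₀ := dist_nonneg
  have hbd0 : ∀ r : ℝ, dist (γh 0) (γh r) = |r| := by
    intro r
    rw [hbi 0 r, zero_sub, abs_neg]
  -- tracking bound
  have trk : ∀ (γ : ℝ → X), IsGeodesicRay γ → γ 0 = x₀ → ∀ r t : ℝ, 0 ≤ t →
      dist (γh r) (γ t) ≤ K' → |r| - K' - c₀ ≤ t ∧ t ≤ |r| + K' + c₀ := by
    intro γ hγ hγ0 r t ht hdd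
    have h1 : dist x₀ (γ t) = t := by rw [← hγ0]; exact ray_dist0 hγ ht
    have ta := dist_triangle x₀ (γh r) (γ t)
    have tb := dist_triangle x₀ (γh 0) (γh r)
    have tc := dist_triangle (γh 0) x₀ (γh r)
    have td := dist_triangle x₀ (γ t) (γh r)
    have e1 : dist (γh 0) x₀ = c₀ := rfl
    have e2 : dist x₀ (γh 0) = c₀ := by rw [dist_comm]
    have e3 := hbd0 r
    have e4 : dist (γ t) (γh r) = dist (γh r) (γ t) := dist_comm _ _
    constructor
    · linarith
    · linarith
  -- each point of γh tracks one of the rays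
  have hQ : ∀ r : ℝ, (∃ t, 0 ≤ t ∧ dist (γh r) (γp t) ≤ K') ∨
      (∃ t, 0 ≤ t ∧ dist (γh r) (γm t) ≤ K') := by
    intro r
    obtain ⟨bpt, hbmem, hdd⟩ := hK'1 (γh r) ⟨r, rfl⟩
    rcases hbmem with ⟨t, ht, rfl⟩ | ⟨t, ht, rfl⟩
    · exact Or.inl ⟨t, ht, hdd⟩
    · exact Or.inr ⟨t, ht, hdd⟩
  -- gromov products along γh
  have gval : ∀ r r' : ℝ, gromov (γh 0) (γh r) (γh r') = (|r| + |r'| - |r - r'|) / 2 := by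
    intro r r'
    unfold gromov
    rw [dist_comm (γh r) (γh 0), dist_comm (γh r') (γh 0), hbd0, hbd0, hbi r r']
  have gmin : ∀ r r' : ℝ, 0 ≤ r → 0 ≤ r' → gromov (γh 0) (γh r) (γh r') = min r r' := by
    intro r r' hr hr'
    rw [gval, abs_of_nonneg hr, abs_of_nonneg hr']
    rcases le_total r r' with h' | h'
    · rw [abs_of_nonpos (by linarith), min_eq_left h']; ring
    · rw [abs_of_nonneg (by linarith), min_eq_right h']; ring
  have gzero : ∀ r r' : ℝ, 0 ≤ r → r' ≤ 0 → gromov (γh 0) (γh r) (γh r') = 0 := by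
    intro r r' hr hr'
    rw [gval, abs_of_nonneg hr, abs_of_nonpos hr', abs_of_nonneg (by linarith)]
    ring
  -- opposite rays bound
  obtain ⟨Np2, hNp2⟩ := Gp (B + 6 * δ + 2)
  obtain ⟨Nm2, hNm2⟩ := Gm (B + 6 * δ + 2)
  set N2 := max Np2 Nm2 + 1 with hN2
  have hOpp : ∀ t t' : ℝ, (N2 : ℝ) ≤ t → (N2 : ℝ) ≤ t' →
      gromov x₀ (γp t) (γm t') ≤ B + 6 * δ := by
    intro t t' ht ht'
    have ht0 : (0 : ℝ) ≤ t := le_trans (by positivity) ht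
    have ht0' : (0 : ℝ) ≤ t' := le_trans (by positivity) ht'
    have hNle : ((max Np2 Nm2 : ℕ) : ℝ) + 1 ≤ (N2 : ℝ) := by rw [hN2]; push_cast; linarith
    have hflm : Nm2 ≤ Nat.floor t' := by
      refine Nat.le_floor ?_
      have : ((Nm2 : ℕ) : ℝ) ≤ ((max Np2 Nm2 : ℕ) : ℝ) := by exact_mod_cast le_max_right Np2 Nm2
      linarith
    have i1 := hNm2 (Nat.floor t') hflm Nm2 le_rfl
    have i1' : B + 6 * δ + 1 ≤ gromov x₀ (γm t') (g⁻¹ ^ Nm2 • x₀) := by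
      have := fliplem γm hγm t' ht0' (g⁻¹ ^ Nm2 • x₀)
      linarith
    have hb2 := Bnd N2 Nm2
    have f2 := fourpt hhyp x₀ (g ^ N2 • x₀) (γm t') (g⁻¹ ^ Nm2 • x₀)
    have ii : gromov x₀ (g ^ N2 • x₀) (γm t') ≤ B + 3 * δ :=
      le_of_min_le_right (le_trans f2 (by linarith)) (by linarith)
    have hflp : Np2 ≤ Nat.floor t := by
      refine Nat.le_floor ?_
      have : ((Np2 : ℕ) : ℝ) ≤ ((max Np2 Nm2 : ℕ) : ℝ) := by exact_mod_cast le_max_left Np2 Nm2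
      linarith
    have hN2p : Np2 ≤ N2 := by rw [hN2]; omega
    have i3 := hNp2 (Nat.floor t) hflp N2 hN2p
    have i3' : B + 6 * δ + 1 ≤ gromov x₀ (γp t) (g ^ N2 • x₀) := by
      have := fliplem γp hγp t ht0 (g ^ N2 • x₀)
      linarith
    have f3 := fourpt hhyp x₀ (γm t') (γp t) (g ^ N2 • x₀)
    have e := grom_comm x₀ (γm t') (g ^ N2 • x₀)
    have target : gromov x₀ (γm t') (γp t) ≤ B + 6 * δ :=
      le_of_min_le_right (le_trans f3 (by rw [e]; linarith)) (by linarith)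
    rw [grom_comm]
    exact target
  -- mixed tracking bound
  have hMix : ∀ r r' : ℝ, (N2 : ℝ) + K' + c₀ ≤ |r| → (N2 : ℝ) + K' + c₀ ≤ |r'| →
      ∀ t t' : ℝ, 0 ≤ t → dist (γh r) (γp t) ≤ K' → 0 ≤ t' → dist (γh r') (γm t') ≤ K' →
      gromov x₀ (γh r) (γh r') ≤ B + 6 * δ + 2 * K' := by
    intro r r' hr hr' t t' ht hdt ht' hdt'
    have h1 := (trk γp hγp hγp0 r t ht hdt).1
    have h2 := (trk γm hγm hγm0 r' t' ht' hdt').1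
    have hOt := hOpp t t' (by linarith) (by linarith)
    have l1 := grom_lip x₀ (γh r) (γp t) (γh r')
    have l2 := grom_lip x₀ (γh r') (γm t') (γp t)
    have e1 := grom_comm x₀ (γp t) (γh r')
    have e2 := grom_comm x₀ (γm t') (γp t)
    linarith
  -- same-ray tracking lower bound
  have hSame : ∀ (γ : ℝ → X), IsGeodesicRay γ → γ 0 = x₀ → ∀ r r' t t' : ℝ,
      0 ≤ t → dist (γh r) (γ t) ≤ K' → 0 ≤ t' → dist (γh r') (γ t') ≤ K' →
      min t t' - 2 * K' ≤ gromov x₀ (γh r) (γh r') := by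
    intro γ hγ hγ0 r r' t t' ht hdt ht' hdt'
    have hmin : gromov x₀ (γ t) (γ t') = min t t' := by
      rw [← hγ0]; exact ray_grom hγ ht ht'
    have l1 := grom_lip x₀ (γ t) (γh r) (γ t')
    have l2 := grom_lip x₀ (γ t') (γh r') (γh r)
    have e1 := grom_comm x₀ (γh r) (γ t')
    have e2 := grom_comm x₀ (γh r') (γh r)
    have e3 := grom_comm x₀ (γ t) (γ t')
    have d1 : dist (γ t) (γh r) = dist (γh r) (γ t) := dist_comm _ _
    have d2 : dist (γ t') (γh r') = dist (γh r') (γ t') := dist_comm _ _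
    have e4 := grom_comm x₀ (γ t') (γh r)
    linarith
  -- threshold
  set R := (N2 : ℝ) + 3 * K' + 2 * c₀ + B + 6 * δ + 1 with hRdef
  obtain ⟨N3, hRN3⟩ : ∃ N3 : ℕ, R + 1 ≤ (N3 : ℝ) := by
    obtain ⟨N3, hN3⟩ := exists_nat_ge (R + 1)
    exact ⟨N3, hN3⟩
  have hN20 : (0 : ℝ) ≤ (N2 : ℝ) := by positivity
  have hN30 : (0 : ℝ) ≤ (N3 : ℝ) := by positivity
  -- generic: indices ≥ N3 at both large ends cannot track opposite rays
  have hNoMix : ∀ r r' : ℝ, (N3 : ℝ) ≤ |r| → (N3 : ℝ) ≤ |r'| →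
      0 ≤ gromov (γh 0) (γh r) (γh r') → (N3 : ℝ) ≤ gromov (γh 0) (γh r) (γh r') + 0 →
      True := fun _ _ _ _ _ _ => trivial
  clear hNoMix
  -- positive end dichotomy
  have key : ∀ r r' : ℝ, (N3 : ℝ) ≤ |r| → (N3 : ℝ) ≤ |r'| →
      (∃ t, 0 ≤ t ∧ dist (γh r) (γp t) ≤ K') →
      (∃ t, 0 ≤ t ∧ dist (γh r') (γm t) ≤ K') →
      gromov (γh 0) (γh r) (γh r') ≤ B + 6 * δ + 2 * K' + c₀ := by
    intro r r' hr hr' ⟨t, ht, hdt⟩ ⟨t', ht', hdt'⟩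
    have hmix := hMix r r' (by linarith [hRN3, hK'0, hc₀0, hB0, hδ]) (by linarith [hRN3]) t t' ht hdt ht' hdt'
    have hb := grom_base (γh 0) x₀ (γh r) (γh r')
    have e : dist (γh 0) x₀ = c₀ := rfl
    linarith
  have hdichP : (∀ n : ℕ, N3 ≤ n → ∃ t, 0 ≤ t ∧ dist (γh (n : ℝ)) (γp t) ≤ K') ∨
      (∀ n : ℕ, N3 ≤ n → ∃ t, 0 ≤ t ∧ dist (γh (n : ℝ)) (γm t) ≤ K') := by
    by_cases hex : ∃ n : ℕ, N3 ≤ n ∧ ∃ t, 0 ≤ t ∧ dist (γh (n : ℝ)) (γm t) ≤ K'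
    · right
      intro n hn
      rcases hQ (n : ℝ) with hcase | hcase
      · exfalso
        obtain ⟨n', hn', hQ'⟩ := hex
        have habs : |(n : ℝ)| = (n : ℝ) := abs_of_nonneg (by positivity)
        have habs' : |(n' : ℝ)| = (n' : ℝ) := abs_of_nonneg (by positivity)
        have hna : (N3 : ℝ) ≤ (n : ℝ) := by exact_mod_cast hn
        have hna' : (N3 : ℝ) ≤ (n' : ℝ) := by exact_mod_cast hn'
        have hk := key (n : ℝ) (n' : ℝ) (by rw [habs]; exact hna) (by rw [habs']; exact hna')
          hcase hQ'
        rw [gmin _ _ (by positivity) (by positivity)] at hk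
        have : (N3 : ℝ) ≤ min (n : ℝ) (n' : ℝ) := le_min hna hna'
        linarith [hRN3]
      · exact hcase
    · left
      intro n hn
      rcases hQ (n : ℝ) with hcase | hcase
      · exact hcase
      · exact absurd ⟨n, hn, hcase⟩ hex
  have hdichN : (∀ n : ℕ, N3 ≤ n → ∃ t, 0 ≤ t ∧ dist (γh (-(n : ℝ))) (γp t) ≤ K') ∨
      (∀ n : ℕ, N3 ≤ n → ∃ t, 0 ≤ t ∧ dist (γh (-(n : ℝ))) (γm t) ≤ K') := by
    by_cases hex : ∃ n : ℕ, N3 ≤ n ∧ ∃ t, 0 ≤ t ∧ dist (γh (-(n : ℝ))) (γm t) ≤ K'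
    · right
      intro n hn
      rcases hQ (-(n : ℝ)) with hcase | hcase
      · exfalso
        obtain ⟨n', hn', hQ'⟩ := hex
        have habs : |(-(n : ℝ))| = (n : ℝ) := by rw [abs_neg, abs_of_nonneg (by positivity)]
        have habs' : |(-(n' : ℝ))| = (n' : ℝ) := by rw [abs_neg, abs_of_nonneg (by positivity)]
        have hna : (N3 : ℝ) ≤ (n : ℝ) := by exact_mod_cast hn
        have hna' : (N3 : ℝ) ≤ (n' : ℝ) := by exact_mod_cast hn'
        have hk := key (-(n : ℝ)) (-(n' : ℝ)) (by rw [habs]; exact hna) (by rw [habs']; exact hna')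
          hcase hQ'
        have hval : gromov (γh 0) (γh (-(n : ℝ))) (γh (-(n' : ℝ))) = min (n : ℝ) (n' : ℝ) := by
          rw [gval, habs, habs']
          rcases le_total (n : ℝ) (n' : ℝ) with h' | h'
          · rw [show -(n : ℝ) - -(n' : ℝ) = (n' : ℝ) - n by ring, abs_of_nonneg (by linarith),
              min_eq_left h']
            ring
          · rw [show -(n : ℝ) - -(n' : ℝ) = (n' : ℝ) - n by ring, abs_of_nonpos (by linarith),
              min_eq_right h']
            ring
        rw [hval] at hk
        have : (N3 : ℝ) ≤ min (n : ℝ) (n' : ℝ) := le_min hna hna'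
        linarith [hRN3]
      · exact hcase
    · left
      intro n hn
      rcases hQ (-(n : ℝ)) with hcase | hcase
      · exact hcase
      · exact absurd ⟨n, hn, hcase⟩ hex
  -- same ray on both ends is impossible
  have hConf : ∀ (γ : ℝ → X), IsGeodesicRay γ → γ 0 = x₀ →
      (∃ t, 0 ≤ t ∧ dist (γh (N3 : ℝ)) (γ t) ≤ K') →
      (∃ t, 0 ≤ t ∧ dist (γh (-(N3 : ℝ))) (γ t) ≤ K') → False := by
    rintro γ hγ hγ0 ⟨t, ht, hdt⟩ ⟨t', ht', hdt'⟩
    have h1 := (trk γ hγ hγ0 (N3 : ℝ) t ht hdt).1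
    have h2 := (trk γ hγ hγ0 (-(N3 : ℝ)) t' ht' hdt').1
    rw [abs_of_nonneg hN30] at h1
    rw [abs_neg, abs_of_nonneg hN30] at h2
    have hlow := hSame γ hγ hγ0 (N3 : ℝ) (-(N3 : ℝ)) t t' ht hdt ht' hdt'
    have hup : gromov x₀ (γh (N3 : ℝ)) (γh (-(N3 : ℝ))) ≤ c₀ := by
      have hb := grom_base x₀ (γh 0) (γh (N3 : ℝ)) (γh (-(N3 : ℝ)))
      have e : dist x₀ (γh 0) = c₀ := dist_comm _ _
      rw [gzero _ _ hN30 (by linarith)] at hb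
      linarith
    have hm : (N3 : ℝ) - K' - c₀ ≤ min t t' := le_min h1 h2
    linarith [hRN3]
  -- convergence of the ends
  have hconv : ∀ (γ : ℝ → X), IsGeodesicRay γ → γ 0 = x₀ → ∀ sgn : ℕ → ℝ,
      (∀ n : ℕ, |sgn n| = (n : ℝ)) →
      (∀ n : ℕ, N3 ≤ n → ∃ t, 0 ≤ t ∧ dist (γh (sgn n)) (γ t) ≤ K') →
      ∀ M : ℝ, ∃ N : ℕ, ∀ n, N ≤ n → ∀ m, N ≤ m →
        M ≤ gromov (γh 0) (γh (sgn n)) (γ (m : ℝ)) := by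
    intro γ hγ hγ0 sgn habs htr M
    obtain ⟨N4, hN4⟩ := exists_nat_ge (M + 2 * K' + 2 * c₀)
    refine ⟨max N3 N4, fun n hn m hm => ?_⟩
    obtain ⟨t, ht, hdt⟩ := htr n (le_trans (le_max_left _ _) hn)
    have h1 := (trk γ hγ hγ0 (sgn n) t ht hdt).1
    rw [habs n] at h1
    have hray : gromov x₀ (γ t) (γ (m : ℝ)) = min t (m : ℝ) := by
      rw [← hγ0]; exact ray_grom hγ ht (by positivity)
    have l1 := grom_lip x₀ (γ t) (γh (sgn n)) (γ (m : ℝ))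
    have dd : dist (γ t) (γh (sgn n)) = dist (γh (sgn n)) (γ t) := dist_comm _ _
    have lb := grom_base x₀ (γh 0) (γh (sgn n)) (γ (m : ℝ))
    have ec : dist x₀ (γh 0) = c₀ := dist_comm _ _
    have hn' : ((N4 : ℕ) : ℝ) ≤ (n : ℝ) := by
      exact_mod_cast le_trans (le_max_right _ _) hn
    have hm' : ((N4 : ℕ) : ℝ) ≤ (m : ℝ) := by
      exact_mod_cast le_trans (le_max_right _ _) hm
    have hmint : M + K' + c₀ ≤ min t (m : ℝ) := le_min (by linarith) (by linarith)
    linarith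
  -- assemble
  rcases hdichP with hP | hP <;> rcases hdichN with hNg | hNg
  · exact absurd trivial (fun _ => hConf γp hγp hγp0 (hP N3 le_rfl) (hNg N3 le_rfl))
  · refine ⟨Boundary.mk ⟨γm, hγm⟩, Boundary.mk ⟨γp, hγp⟩, Ne.symm hpq, hqmem, hpmem, γh,
      hbi, ?_, ?_⟩
    · exact ⟨⟨γm, hγm⟩, rfl, hconv γm hγm hγm0 (fun n => -(n : ℝ))
        (fun n => by rw [abs_neg, abs_of_nonneg (by positivity)]) hNg⟩
    · exact ⟨⟨γp, hγp⟩, rfl, hconv γp hγp hγp0 (fun n => (n : ℝ))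
        (fun n => abs_of_nonneg (by positivity)) hP⟩
  · refine ⟨Boundary.mk ⟨γp, hγp⟩, Boundary.mk ⟨γm, hγm⟩, hpq, hpmem, hqmem, γh,
      hbi, ?_, ?_⟩
    · exact ⟨⟨γp, hγp⟩, rfl, hconv γp hγp hγp0 (fun n => -(n : ℝ))
        (fun n => by rw [abs_neg, abs_of_nonneg (by positivity)]) hNg⟩
    · exact ⟨⟨γm, hγm⟩, rfl, hconv γm hγm hγm0 (fun n => (n : ℝ))
        (fun n => abs_of_nonneg (by positivity)) hP⟩
  · exact absurd trivial (fun _ => hConf γm hγm hγm0 (hP N3 le_rfl) (hNg N3 le_rfl))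

end KWAux

theorem statement8 {G : Type u} {X : Type v} [Group G] [MetricSpace X] [MulAction G X]
    [Nonempty X] (δ : ℝ) (hiso : IsometricAction G X) (hsg : StronglyGeodesic X)
    (hhyp : DeltaHyperbolic δ X) (U : Subgroup G) (hU : U ≠ ⊥) :
    (cHull X δ U).Nonempty := by
  have hδ : 0 ≤ δ := KWAux.delta_nonneg hhyp
  refine KWAux.chull_nonempty_of_zset δ U hhyp.1 ?_
  by_cases hE : (smallDispSet X δ U).Nonempty
  · obtain ⟨a, ha⟩ := hE
    by_cases h2 : ∃ b ∈ smallDispSet X δ U, b ≠ a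
    · obtain ⟨b, hb, hne⟩ := h2
      obtain ⟨s, hs⟩ := hhyp.1 a b
      exact ⟨a, Or.inr ⟨Sum.inl a, Or.inr ⟨a, ha, rfl⟩, Sum.inl b, Or.inr ⟨b, hb, rfl⟩,
        fun hh => hne (Sum.inl.inj hh).symm, s, hs, KWAux.seg_left_mem hs⟩⟩
    · by_cases h3 : (limitSet X U).Nonempty
      · obtain ⟨p, hp⟩ := h3
        obtain ⟨x₀', useq, γ₀, hmk, hcond⟩ := hp
        obtain ⟨γ', hray', h0', hasym⟩ := hsg.2.1 γ₀.1 γ₀.2 a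
        refine ⟨a, Or.inr ⟨Sum.inl a, Or.inr ⟨a, ha, rfl⟩, Sum.inr p, Or.inl ⟨p, ⟨x₀', useq, γ₀, hmk, hcond⟩, rfl⟩,
          by simp, γ' '' Ici 0, ?_, ⟨0, Set.mem_Ici.mpr le_rfl, h0'⟩⟩⟩
        refine ⟨γ', h0', ⟨hray', ?_⟩, rfl⟩
        rw [← hmk]
        exact Quotient.sound (asymptotic_symm hasym)
      · refine ⟨a, Or.inl ⟨a, ?_, rfl⟩⟩
        ext w
        simp only [Set.mem_singleton_iff]
        constructor
        · rintro (⟨q, hq, rfl⟩ | ⟨b, hb, rfl⟩)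
          · exact absurd ⟨q, hq⟩ h3
          · have hba : b = a := by
              by_contra hh
              exact h2 ⟨b, hb, hh⟩
            rw [hba]
        · rintro rfl
          exact Or.inr ⟨a, ha, rfl⟩
  · have hdisp : ∀ x : X, ∀ u : G, u ∈ U → u ≠ 1 → 100 * δ < dist x (u • x) := by
      intro x u hu h1
      by_contra hle
      push_neg at hle
      exact hE ⟨x, u, hu, h1, hle⟩
    obtain ⟨gu, hgu⟩ := Subgroup.ne_bot_iff_exists_ne_one.mp hU
    have hgne : (gu : G) ≠ 1 := fun h => hgu (Subtype.coe_injective (by simpa using h))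
    obtain ⟨p, q, hpq, hpmem, hqmem, γ, hjoins⟩ :=
      KWAux.hard_case δ hδ hiso hsg hhyp U (gu : G) gu.2 hdisp hgne
    exact ⟨γ 0, Or.inr ⟨Sum.inr p, Or.inl ⟨p, hpmem, rfl⟩, Sum.inr q, Or.inl ⟨q, hqmem, rfl⟩,
      fun hh => hpq (Sum.inr.inj hh), Set.range γ, ⟨γ, hjoins, rfl⟩, ⟨0, rfl⟩⟩⟩

end KW
end
end

section
/- For all integers n, k, δ ≥ 1 there exists a constant k₁ = k₁(n,k,δ) with the following property. Suppose G is an almost torsion-free group with a finite generating set S of n elements whose Cayley graph X = Γ(G,S) is δ-hyperbolic. Then for every nontrivial element g ∈ G of finite order, the set E(g,k) = {x ∈ X : d(x, gx) ≤ k} has diameter at most k₁ in X. -/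
noncomputable section

universe u v

/-!
Points of the geodesic `[x, y]` are moved by at most `3k + 4δ` by `g`, so every vertex `a`
within distance `1` of `[x, y]` has its conjugate `a⁻¹ g a` in a word ball of radius
`3k + 4δ + 2`, which has at most `(2n + 1)^(3k + 4δ + 2)` elements. Two vertices give the same
conjugate only if they differ by an element of the centralizer of `g`. That centralizer is a finite
subgroup, so it has a quasi-fixed point, and this bounds its order by the size of a word ball of
radius `4δ + 4`. As a long geodesic passes near many vertices, `d(x, y)` is bounded.
-/

namespace KW

open Pointwise Metric Set

section Geodesics

variable {Y : Type*} [MetricSpace Y]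

lemma IsGeodesicSegment.dist_add_dist {s : Set Y} {a b q : Y} (hs : IsGeodesicSegment s a b)
    (hq : q ∈ s) : dist a q + dist q b = dist a b := by
  obtain ⟨L, f, hL, rfl, rfl, hiso, rfl⟩ := hs
  obtain ⟨u, hu, rfl⟩ := hq
  rw [hiso 0 ⟨le_rfl, hL⟩ u hu, hiso u hu L ⟨hL, le_rfl⟩, hiso 0 ⟨le_rfl, hL⟩ L ⟨hL, le_rfl⟩,
    abs_of_nonpos (by linarith [hu.1]), abs_of_nonpos (by linarith [hu.2]),
    abs_of_nonpos (by linarith)]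
  ring

lemma IsGeodesicSegment.dist_le {s : Set Y} {a b q : Y} (hs : IsGeodesicSegment s a b)
    (hq : q ∈ s) : dist a q ≤ dist a b := by
  linarith [hs.dist_add_dist hq, dist_nonneg (x := q) (y := b)]

lemma IsGeodesicSegment.dist_le_sub_of_mem {s : Set Y} {a z q : Y}
    (hs : IsGeodesicSegment s a z) (hq : q ∈ s) (m : Y) :
    dist m z ≤ dist a z - dist a m + 2 * dist m q := by
  linarith [hs.dist_add_dist hq, dist_triangle m q z, dist_triangle a q m, dist_comm q m]

variable {f : ℝ → Y} {L : ℝ} {a b : Y}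

lemma GeodParam.isGeodesicSegment (hf : GeodParam f L a b) :
    IsGeodesicSegment (f '' Icc 0 L) a b :=
  ⟨L, f, hf.1, hf.2.1, hf.2.2.1, hf.2.2.2, rfl⟩

lemma GeodParam.dist_left (hf : GeodParam f L a b) {t : ℝ} (ht : t ∈ Icc 0 L) :
    dist a (f t) = t := by
  obtain ⟨hL, rfl, -, hiso⟩ := hf
  rw [hiso 0 ⟨le_rfl, hL⟩ t ht, abs_of_nonpos (by linarith [ht.1])]
  ring

lemma GeodParam.dist_right (hf : GeodParam f L a b) {t : ℝ} (ht : t ∈ Icc 0 L) :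
    dist (f t) b = L - t := by
  obtain ⟨hL, -, rfl, hiso⟩ := hf
  rw [hiso t ht L ⟨hL, le_rfl⟩, abs_of_nonpos (by linarith [ht.2])]
  ring

lemma GeodParam.reverse (hf : GeodParam f L a b) : GeodParam (fun u => f (L - u)) L b a := by
  obtain ⟨hL, rfl, rfl, hiso⟩ := hf
  refine ⟨hL, by simp, by simp, fun u hu v hv => ?_⟩
  rw [hiso (L - u) ⟨by linarith [hu.2], by linarith [hu.1]⟩
    (L - v) ⟨by linarith [hv.2], by linarith [hv.1]⟩, ← abs_neg]
  ring_nf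

lemma GeodParam.comp_isometry {Z : Type*} [MetricSpace Z] {φ : Y → Z} (hφ : Isometry φ)
    (hf : GeodParam f L a b) : GeodParam (φ ∘ f) L (φ a) (φ b) := by
  obtain ⟨hL, rfl, rfl, hiso⟩ := hf
  exact ⟨hL, rfl, rfl, fun u hu v hv => by rw [Function.comp_apply, Function.comp_apply,
    hφ.dist_eq, hiso u hu v hv]⟩

lemma GeodesicSpace.exists_geodParam (hY : GeodesicSpace Y) (a b : Y) :
    ∃ f : ℝ → Y, GeodParam f (dist a b) a b := by
  obtain ⟨-, L, f, hL, h0, hL', hiso, -⟩ := hY a b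
  have hf : GeodParam f L a b := ⟨hL, h0, hL', hiso⟩
  have hlen : dist a b = L := by simpa [hL'] using hf.dist_left ⟨hL, le_rfl⟩
  exact ⟨f, hlen ▸ hf⟩

end Geodesics

section Displacement

variable {Y : Type*} [MetricSpace Y] {φ : Y → Y}

lemma dist_apply_le_of_isometry (hφ : Isometry φ) (p q : Y) :
    dist p (φ p) ≤ 2 * dist p q + dist q (φ q) := by
  have := dist_triangle4 p q (φ q) (φ p)
  rw [hφ.dist_eq, dist_comm q p] at this
  linarith

lemma IsGeodesicSegment.dist_apply_le (hφ : Isometry φ) {s : Set Y} {a q : Y}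
    (hs : IsGeodesicSegment s a (φ a)) (hq : q ∈ s) (p : Y) :
    dist p (φ p) ≤ 2 * dist p q + 3 * dist a (φ a) := by
  linarith [dist_apply_le_of_isometry hφ p a, dist_triangle p q a, dist_comm q a, hs.dist_le hq]

variable {f : ℝ → Y} {L t v : ℝ} {x y : Y}

lemma GeodParam.dist_apply_le_of_mem (hφ : Isometry φ) (hf : GeodParam f L x y)
    (ht : t ∈ Icc 0 L) (hv : v ∈ Icc 0 L) :
    dist (f t) (φ (f t)) ≤ 2 * dist (f t) (φ (f v)) + dist x (φ x) := by
  have hvt : |v - t| ≤ dist x (φ x) + dist (f t) (φ (f v)) := by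
    have := dist_dist_dist_le (φ x) (φ (f v)) x (f t)
    rwa [hφ.dist_eq, hf.dist_left hv, hf.dist_left ht, Real.dist_eq, dist_comm (φ x),
      dist_comm (φ (f v))] at this
  have := dist_triangle (f t) (φ (f v)) (φ (f t))
  rw [hφ.dist_eq, hf.2.2.2 v hv t ht] at this
  linarith

/-- Through the thin triangles `(x, y, φ y)` and `(x, φ y, φ x)`, a point of `[x, y]` is
`δ`-close to `[y, φ y]` or `2δ`-close to `[x, φ x]` or to `φ [x, y]`. -/
theorem GeodParam.dist_apply_le {δ K : ℝ} (hY : DeltaHyperbolic δ Y) (hδ : 0 ≤ δ)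
    (hφ : Isometry φ) (hx : dist x (φ x) ≤ K) (hy : dist y (φ y) ≤ K) (hf : GeodParam f L x y)
    (ht : t ∈ Icc 0 L) : dist (f t) (φ (f t)) ≤ 3 * K + 4 * δ := by
  obtain ⟨s₂, hs₂⟩ := hY.1 y (φ y)
  obtain ⟨s₃, hs₃⟩ := hY.1 x (φ y)
  obtain ⟨s₄, hs₄⟩ := hY.1 x (φ x)
  have hφf := hf.reverse.comp_isometry hφ
  obtain ⟨q, hq, hpq⟩ := hY.2 x y (φ y) _ s₂ s₃ hf.isGeodesicSegment hs₂ hs₃ (f t) ⟨t, ht, rfl⟩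
  rcases hq with hq | hq
  · linarith [hs₂.dist_apply_le hφ hq (f t)]
  obtain ⟨r, hr, hqr⟩ := hY.2 x (φ y) (φ x) s₃ _ s₄ hs₃ hφf.isGeodesicSegment hs₄ q hq
  have hpr : dist (f t) r ≤ 2 * δ := by linarith [dist_triangle (f t) q r]
  rcases hr with ⟨u, hu, rfl⟩ | hr
  · have := hf.dist_apply_le_of_mem hφ ht (v := L - u) ⟨by linarith [hu.2], by linarith [hu.1]⟩
    have hK : 0 ≤ K := dist_nonneg.trans hx
    simp only [Function.comp_apply] at hpr
    linarith
  · linarith [hs₄.dist_apply_le hφ hr (f t)]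

end Displacement

section QuasiCentre

variable {Y : Type*} [MetricSpace Y] {δ : ℝ}

lemma GeodParam.dist_midpoint_le (hY : DeltaHyperbolic δ Y) {f : ℝ → Y} {L : ℝ} {x x' z : Y}
    (hf : GeodParam f L x x') {r : ℝ} (hx : dist x z ≤ r) (hx' : dist x' z ≤ r) :
    dist (f (L / 2)) z ≤ r - L / 2 + 2 * δ := by
  have hmid : L / 2 ∈ Icc 0 L := ⟨by linarith [hf.1], by linarith [hf.1]⟩
  obtain ⟨s₂, hs₂⟩ := hY.1 x' z
  obtain ⟨s₃, hs₃⟩ := hY.1 x z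
  obtain ⟨q, hq, hmq⟩ :=
    hY.2 x x' z _ s₂ s₃ hf.isGeodesicSegment hs₂ hs₃ (f (L / 2)) ⟨L / 2, hmid, rfl⟩
  rcases hq with hq | hq
  · have := hs₂.dist_le_sub_of_mem hq (f (L / 2))
    rw [dist_comm x' (f (L / 2)), hf.dist_right hmid] at this
    linarith
  · have := hs₃.dist_le_sub_of_mem hq (f (L / 2))
    rw [hf.dist_left hmid] at this
    linarith

/-- The quasi-fixed point is an almost minimiser of the radius of an orbit: by
`GeodParam.dist_midpoint_le`, the midpoint of `[x, h • x]` would otherwise have smaller radius. -/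
theorem DeltaHyperbolic.exists_forall_dist_smul_le (hY : DeltaHyperbolic δ Y) [Nonempty Y]
    {H : Type*} [Group H] [Finite H] [MulAction H Y] (hact : IsometricAction H Y) :
    ∃ x : Y, ∀ h : H, dist x (h • x) ≤ 4 * δ + 2 := by
  obtain ⟨y₀⟩ := ‹Nonempty Y›
  set ρ : Y → ℝ := fun x => ⨆ c : H, dist x (c • y₀)
  have le_ρ (x : Y) (c : H) : dist x (c • y₀) ≤ ρ x :=
    le_ciSup (f := fun c : H => dist x (c • y₀)) (Set.finite_range _).bddAbove c
  have ρ_nonneg (x : Y) : 0 ≤ ρ x := dist_nonneg.trans (le_ρ x 1)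
  have ρ_smul (h : H) (x : Y) : ρ (h • x) ≤ ρ x := ciSup_le fun c => by
    rw [show c • y₀ = h • (h⁻¹ * c) • y₀ by rw [smul_smul, mul_inv_cancel_left], hact]
    exact le_ρ x _
  obtain ⟨x, hx⟩ := exists_lt_of_ciInf_lt (lt_add_one (⨅ x, ρ x))
  refine ⟨x, fun h => ?_⟩
  obtain ⟨f, hf⟩ := hY.1.exists_geodParam x (h • x)
  have hmid : ρ (f (dist x (h • x) / 2)) ≤ ρ x - dist x (h • x) / 2 + 2 * δ :=
    ciSup_le fun c => hf.dist_midpoint_le hY (le_ρ x c) ((le_ρ _ c).trans (ρ_smul h x))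
  have := ciInf_le (f := ρ) ⟨0, by rintro _ ⟨y, rfl⟩; exact ρ_nonneg y⟩ (f (dist x (h • x) / 2))
  linarith

end QuasiCentre

section WordBall

variable {G : Type*} [Group G]

lemma exists_word_of_closure_eq_top {S : Set G} (hS : Subgroup.closure S = ⊤) (w : G) :
    ∃ n, ∃ f : Fin n → G, (∀ i, f i ∈ S ∨ (f i)⁻¹ ∈ S) ∧ (List.ofFn f).prod = w := by
  have hw : w ∈ Submonoid.closure (S ∪ S⁻¹) := by
    rw [← Subgroup.closure_toSubmonoid, hS]
    trivial
  obtain ⟨l, hl, rfl⟩ := Submonoid.exists_list_of_mem_closure hw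
  exact ⟨l.length, l.get, fun i => hl _ (l.get_mem i), by rw [List.ofFn_get]⟩

variable [DecidableEq G]

def wordBall (S : Finset G) (m : ℕ) : Finset G := insert 1 (S ∪ S⁻¹) ^ m

lemma card_wordBall_le (S : Finset G) (m : ℕ) : (wordBall S m).card ≤ (2 * S.card + 1) ^ m := by
  have : (insert 1 (S ∪ S⁻¹)).card ≤ 2 * S.card + 1 := by
    linarith [Finset.card_insert_le 1 (S ∪ S⁻¹), Finset.card_union_le S S⁻¹, Finset.card_inv S]
  exact Finset.card_pow_le.trans (Nat.pow_le_pow_left this m)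

lemma mem_wordBall_of_wordLength_le {S : Finset G} (hS : Subgroup.closure (S : Set G) = ⊤)
    {w : G} {m : ℕ} (hw : wordLength (S : Set G) w ≤ m) : w ∈ wordBall S m := by
  obtain ⟨f, hfS, hfw⟩ := Nat.sInf_mem (exists_word_of_closure_eq_top hS w)
  have hfT (i : Fin _) : f i ∈ insert 1 (S ∪ S⁻¹) := by
    rcases hfS i with h | h
    · exact Finset.mem_insert_of_mem (Finset.mem_union_left _ h)
    · exact Finset.mem_insert_of_mem (Finset.mem_union_right _ (Finset.mem_inv'.mpr h))
  refine Finset.pow_subset_pow_right (Finset.mem_insert_self 1 _) hw ?_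
  exact Finset.mem_pow.mpr ⟨fun i => ⟨f i, hfT i⟩, hfw⟩

end WordBall

section CayleyGraph

variable {G : Type*} {X : Type*} [Group G] [MetricSpace X] [MulAction G X]
  {S : Finset G} {ι : G → X}

lemma IsometricAction.isometry_smul (hact : IsometricAction G X) (g : G) :
    Isometry (fun x : X => g • x) :=
  Isometry.of_dist_eq (hact g)

lemma IsCayleyGraph.exists_dist_le_one (hC : IsCayleyGraph G (S : Set G) X ι) (p : X) :
    ∃ a : G, dist p (ι a) ≤ 1 := by
  obtain ⟨a, b, hab, s, hs, hp⟩ := hC.2.2.2.2.2 p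
  have hdist : dist (ι a) (ι b) ≤ 1 := by
    rw [hC.2.2.2.2.1]
    exact_mod_cast hab
  exact ⟨a, by linarith [hs.dist_le hp, dist_comm p (ι a)]⟩

lemma IsCayleyGraph.conj_mem_wordBall [DecidableEq G] (hC : IsCayleyGraph G (S : Set G) X ι)
    (hS : Subgroup.closure (S : Set G) = ⊤) {g a : G} {p : X} {m : ℕ}
    (hpa : dist p (ι a) ≤ 1) (hp : dist p (g • p) + 2 ≤ m) : a⁻¹ * g * a ∈ wordBall S m := by
  have hdist : dist (ι a) (ι (a * (a⁻¹ * g * a))) ≤ m := by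
    rw [show a * (a⁻¹ * g * a) = g * a by group, hC.2.1]
    linarith [dist_apply_le_of_isometry (hC.1.isometry_smul g) (ι a) p, dist_comm p (ι a)]
  rw [hC.2.2.2.2.1, inv_mul_cancel_left] at hdist
  exact mem_wordBall_of_wordLength_le hS (by exact_mod_cast hdist)

theorem IsCayleyGraph.card_le_card_wordBall [DecidableEq G] {δ : ℝ}
    (hC : IsCayleyGraph G (S : Set G) X ι) (hS : Subgroup.closure (S : Set G) = ⊤)
    (hY : DeltaHyperbolic δ X) (Z : Subgroup G) [Finite Z] {m : ℕ} (hm : 4 * δ + 4 ≤ m) :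
    Nat.card Z ≤ (wordBall S m).card := by
  have : Nonempty X := ⟨ι 1⟩
  obtain ⟨x, hx⟩ := hY.exists_forall_dist_smul_le (H := Z) fun h => hC.1 h
  obtain ⟨a, ha⟩ := hC.exists_dist_le_one x
  have hconj (h : Z) : a⁻¹ * h * a ∈ wordBall S m :=
    hC.conj_mem_wordBall hS ha (by linarith [show dist x ((h : G) • x) ≤ 4 * δ + 2 from hx h])
  rw [← Nat.card_eq_finsetCard]
  refine Nat.card_le_card_of_injective (fun h => ⟨a⁻¹ * h * a, hconj h⟩) fun h h' hh => ?_
  simpa using hh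

end CayleyGraph

lemma card_le_card_centralizer_mul_card {G : Type*} [Group G] {g : G}
    [Finite (Subgroup.centralizer {g})] {F T : Finset G} (hF : ∀ a ∈ F, a⁻¹ * g * a ∈ T) :
    F.card ≤ Nat.card (Subgroup.centralizer {g}) * T.card := by
  classical
  refine (F.card_le_mul_card_image (f := fun a => a⁻¹ * g * a) _ fun b hb => ?_).trans
    (Nat.mul_le_mul_left _ (Finset.card_le_card fun b hb => ?_))
  · obtain ⟨a₀, ha₀, rfl⟩ := Finset.mem_image.mp hb
    rw [← Set.ncard_coe_finset, ← SetLike.coe_sort_coe, Nat.card_coe_set_eq]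
    refine Set.ncard_le_ncard_of_injOn (fun a => a * a₀⁻¹) (fun a ha => ?_)
      (fun a _ a' _ h => mul_right_cancel h) (Set.toFinite _)
    have hconj : a⁻¹ * g * a = a₀⁻¹ * g * a₀ := (Finset.mem_filter.mp ha).2
    rw [SetLike.mem_coe, Subgroup.mem_centralizer_singleton_iff]
    calc a * a₀⁻¹ * g = a * (a₀⁻¹ * g * a₀) * a₀⁻¹ := by group
      _ = g * (a * a₀⁻¹) := by rw [← hconj]; group
  · obtain ⟨a, ha, rfl⟩ := Finset.mem_image.mp hb
    exact hF a ha

/-- The vertices are chosen near `f 0, f 3, …, f (3N)`; they are distinct as these points are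
`3` apart. -/
lemma GeodParam.exists_finset_near {α Y : Type*} [MetricSpace Y] {ι : α → Y}
    (hι : ∀ p, ∃ a, dist p (ι a) ≤ 1) {f : ℝ → Y} {L : ℝ} {x y : Y} (hf : GeodParam f L x y)
    {N : ℕ} (hN : 3 * (N : ℝ) ≤ L) :
    ∃ F : Finset α, F.card = N + 1 ∧ ∀ a ∈ F, ∃ t ∈ Icc 0 L, dist (f t) (ι a) ≤ 1 := by
  classical
  choose v hv using fun i : ℕ => hι (f (3 * i))
  have hmem {i : ℕ} (hi : i ∈ Finset.range (N + 1)) : 3 * (i : ℝ) ∈ Icc 0 L := by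
    have : (i : ℝ) ≤ N := by exact_mod_cast Nat.lt_succ_iff.mp (Finset.mem_range.mp hi)
    exact ⟨by positivity, by linarith⟩
  refine ⟨(Finset.range (N + 1)).image v, ?_, ?_⟩
  · rw [Finset.card_image_of_injOn, Finset.card_range]
    intro i hi j hj hij
    have hvi := hv i
    rw [hij] at hvi
    have hdist : dist (f (3 * i)) (f (3 * j)) ≤ 2 := by
      linarith [dist_triangle (f (3 * i)) (ι (v j)) (f (3 * j)), hv j,
        dist_comm (f (3 * j)) (ι (v j))]
    rw [hf.2.2.2 _ (hmem hi) _ (hmem hj), ← mul_sub, abs_mul, abs_of_pos three_pos] at hdist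
    have := abs_sub_lt_iff.mp (show |(i : ℝ) - j| < 1 by linarith)
    have h₁ : i < j + 1 := by exact_mod_cast (by linarith : (i : ℝ) < j + 1)
    have h₂ : j < i + 1 := by exact_mod_cast (by linarith : (j : ℝ) < i + 1)
    omega
  · simp only [Finset.mem_image]
    rintro _ ⟨i, hi, rfl⟩
    exact ⟨_, hmem hi, hv i⟩

theorem statement12_general (n k δ : ℕ) :
    ∃ k₁ : ℝ, ∀ (G : Type u) (X : Type v)
      [Group G] [MetricSpace X] [MulAction G X] (S : Finset G) (ι : G → X),
      S.card = n → Subgroup.closure (S : Set G) = ⊤ →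
      IsCayleyGraph G (S : Set G) X ι → DeltaHyperbolic (δ : ℝ) X →
      AlmostTorsionFree G →
      ∀ g : G, g ≠ 1 → IsOfFinOrder g →
        ∀ x y : X, dist x (g • x) ≤ (k : ℝ) → dist y (g • y) ≤ (k : ℝ) →
          dist x y ≤ k₁ := by
  refine ⟨3 * (((2 * n + 1) ^ (4 * δ + 4) * (2 * n + 1) ^ (3 * k + 4 * δ + 2) : ℕ) : ℝ), ?_⟩
  intro G X _ _ _ S ι hcard hS hC hY hatf g hg hgfin x y hx hy
  classical
  subst hcard
  by_contra! hxy
  obtain ⟨f, hf⟩ := hY.1.exists_geodParam x y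
  obtain ⟨F, hFcard, hF⟩ := hf.exists_finset_near hC.exists_dist_le_one hxy.le
  have : Finite (Subgroup.centralizer {g}) := (hatf g hg hgfin).to_subtype
  have hconj : ∀ a ∈ F, a⁻¹ * g * a ∈ wordBall S (3 * k + 4 * δ + 2) := fun a ha => by
    obtain ⟨t, ht, hta⟩ := hF a ha
    refine hC.conj_mem_wordBall hS hta ?_
    have := hf.dist_apply_le hY (Nat.cast_nonneg δ) (hC.1.isometry_smul g) hx hy ht
    push_cast
    linarith
  have hcent := hC.card_le_card_wordBall hS hY (Subgroup.centralizer {g}) (m := 4 * δ + 4)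
    (by push_cast; rfl)
  have := (card_le_card_centralizer_mul_card hconj).trans
    (Nat.mul_le_mul (hcent.trans (card_wordBall_le S _)) (card_wordBall_le S _))
  omega

theorem statement12 (n k δ : ℕ) (hn : 1 ≤ n) (hk : 1 ≤ k) (hδ : 1 ≤ δ) :
    ∃ k₁ : ℝ, ∀ (G : Type u) (X : Type v)
      [Group G] [MetricSpace X] [MulAction G X] (S : Finset G) (ι : G → X),
      S.card = n → Subgroup.closure (S : Set G) = ⊤ →
      IsCayleyGraph G (S : Set G) X ι → DeltaHyperbolic (δ : ℝ) X →
      AlmostTorsionFree G →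
      ∀ g : G, g ≠ 1 → IsOfFinOrder g →
        ∀ x y : X, dist x (g • x) ≤ (k : ℝ) → dist y (g • y) ≤ (k : ℝ) →
          dist x y ≤ k₁ :=
  statement12_general n k δ

end KW
end
end
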